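/- arXiv:2010.08156 — 8 statements merged into one kernel-verified Lean document; each statement's English description precedes it below -/
import Mathlib

section
/- Let α ∈ ℤ_{≥0}^n be a composition and let F be a semistandard skyline filling for α. If two boxes in consecutive columns carry equal entries, i.e. F(i,j) = F(i',j+1), then i ≤ i'. -/
open Classical MvPolynomial

noncomputable section

namespace Skyline

/-- The box in row `i` and column `j` of the skyline diagram of the composition
`α = (α 1, …, α n)` (rows indexed top to bottom, row `i` has `α i` boxes). -/
def Box (n : ℕ) (α : ℕ → ℕ) (i j : ℕ) : Prop :=
  1 ≤ i ∧ i ≤ n ∧ 1 ≤ j ∧ j ≤ α i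

/-- `F` is a semistandard skyline filling for `α` (with the convention that
`F` takes the value `0` outside of the skyline diagram):
(i) entries weakly decrease from left to right along each row;
(ii) each entry satisfies `F i j ≤ i`;
(iii) the entries in each column are distinct;
(iv) whenever an entry `F i j` lies strictly below an entry `F i' j` in the same
column with `F i j < F i' j`, the box `(i', j+1)` belongs to the diagram and
`F i j < F i' (j+1)`. -/
def IsSSF (n : ℕ) (α : ℕ → ℕ) (F : ℕ → ℕ → ℕ) : Prop :=
  (∀ i j, ¬ Box n α i j → F i j = 0) ∧
  (∀ i j, Box n α i j → 1 ≤ F i j) ∧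
  (∀ i j, 1 ≤ j → Box n α i (j+1) → F i (j+1) ≤ F i j) ∧
  (∀ i j, Box n α i j → F i j ≤ i) ∧
  (∀ i i' j, Box n α i j → Box n α i' j → i ≠ i' → F i j ≠ F i' j) ∧
  (∀ i i' j, Box n α i j → Box n α i' j → i' < i → F i j < F i' j →
      Box n α i' (j+1) ∧ F i j < F i' (j+1))

/-- Column `j` of the filling `F` contains the entry `t`. -/
def ColContains (n : ℕ) (α : ℕ → ℕ) (F : ℕ → ℕ → ℕ) (j t : ℕ) : Prop :=
  ∃ i, Box n α i j ∧ F i j = t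

/-- The unpaired entry `t` in box `(i,j)` and the unpaired entry `t+1` in box
`(i',j')` form a pseudo-free pair: the `t+1` lies strictly above and strictly to
the right of the `t`, and every column strictly between them contains both `t`
and `t+1`. -/
def PseudoFreePair (n : ℕ) (α : ℕ → ℕ) (F : ℕ → ℕ → ℕ) (t i j i' j' : ℕ) : Prop :=
  Box n α i j ∧ F i j = t ∧ ¬ ColContains n α F j (t+1) ∧
  Box n α i' j' ∧ F i' j' = t+1 ∧ ¬ ColContains n α F j' t ∧
  i' < i ∧ j < j' ∧
  ∀ k, j < k → k < j' → ColContains n α F k t ∧ ColContains n α F k (t+1)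

/-- The entry `t` in box `(i,j)` of `F` is free: it is neither paired nor
pseudo-free. -/
def FreeT (n : ℕ) (α : ℕ → ℕ) (F : ℕ → ℕ → ℕ) (t i j : ℕ) : Prop :=
  Box n α i j ∧ F i j = t ∧ ¬ ColContains n α F j (t+1) ∧
  ¬ ∃ i' j', PseudoFreePair n α F t i j i' j'

/-- The entry `t+1` in box `(i,j)` of `F` is free: it is neither paired nor
pseudo-free. -/
def FreeTp1 (n : ℕ) (α : ℕ → ℕ) (F : ℕ → ℕ → ℕ) (t i j : ℕ) : Prop :=
  Box n α i j ∧ F i j = t+1 ∧ ¬ ColContains n α F j t ∧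
  ¬ ∃ i₀ j₀, PseudoFreePair n α F t i₀ j₀ i j

/-- The lowering operator `L_{r,t}`: if row `r` has a free entry `t+1`, replace
the rightmost free `t+1` in row `r` (in column `j`) by `t`, and exchange the
entries `t` and `t+1` in each column `k` of the maximal interval `j' ≤ k < j`
such that `F r k = t+1` and column `k` contains an entry `t` strictly below row
`r`; otherwise do nothing. -/
def Lop (n : ℕ) (α : ℕ → ℕ) (r t : ℕ) (F : ℕ → ℕ → ℕ) : ℕ → ℕ → ℕ :=
  if {j | FreeTp1 n α F t r j}.Nonempty then
    let j := sSup {j | FreeTp1 n α F t r j}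
    let S : Set ℕ := {k | k < j ∧ ∀ m, k ≤ m → m < j →
      F r m = t + 1 ∧ ∃ i, r < i ∧ Box n α i m ∧ F i m = t}
    fun i c =>
      if i = r ∧ c = j then t
      else if c ∈ S ∧ F i c = t then t + 1
      else if c ∈ S ∧ F i c = t + 1 then t
      else F i c
  else F

/-- The raising operator `R_{r,t}`: if row `r` has a free entry `t`, replace
the leftmost free `t` in row `r` (in column `j`) by `t+1`, and exchange the
entries `t` and `t+1` in each column `k` of the maximal interval `j' ≤ k < j`
such that `F r k = t` and column `k` contains an entry `t+1` strictly below row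
`r`; otherwise do nothing. -/
def Rop (n : ℕ) (α : ℕ → ℕ) (r t : ℕ) (F : ℕ → ℕ → ℕ) : ℕ → ℕ → ℕ :=
  if {j | FreeT n α F t r j}.Nonempty then
    let j := sInf {j | FreeT n α F t r j}
    let S : Set ℕ := {k | k < j ∧ ∀ m, k ≤ m → m < j →
      F r m = t ∧ ∃ i, r < i ∧ Box n α i m ∧ F i m = t + 1}
    fun i c =>
      if i = r ∧ c = j then t + 1
      else if c ∈ S ∧ F i c = t then t + 1
      else if c ∈ S ∧ F i c = t + 1 then t
      else F i c
  else F

/-- The involution `Φ_{r,t}`: with `n₁` the number of free entries `t+1` and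
`n₂` the number of free entries `t` in row `r`, apply `L_{r,t}` iterated
`n₁ - n₂` times if `n₁ > n₂`, apply `R_{r,t}` iterated `n₂ - n₁` times if
`n₁ < n₂`, and do nothing if `n₁ = n₂`. -/
def Phi (n : ℕ) (α : ℕ → ℕ) (r t : ℕ) (F : ℕ → ℕ → ℕ) : ℕ → ℕ → ℕ :=
  let n₁ := {j | FreeTp1 n α F t r j}.ncard
  let n₂ := {j | FreeT n α F t r j}.ncard
  if n₂ < n₁ then (Lop n α r t)^[n₁ - n₂] F
  else if n₁ < n₂ then (Rop n α r t)^[n₂ - n₁] F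
  else F

/-- The involution `Φ_r`: apply `Φ_{i,r}` for every row index `i` with
`r + 1 ≤ i ≤ n`. -/
def PhiAll (n : ℕ) (α : ℕ → ℕ) (r : ℕ) (F : ℕ → ℕ → ℕ) : ℕ → ℕ → ℕ :=
  (List.range' (r+1) (n - r)).foldl (fun G i => Phi n α i r G) F

/-- The monomial `x^F = ∏_{(i,j) ∈ D(α)} x_{F(i,j)}` of a filling `F`. -/
def weight (n : ℕ) (α : ℕ → ℕ) (F : ℕ → ℕ → ℕ) : MvPolynomial ℕ ℤ :=
  ∏ i ∈ Finset.Icc 1 n, ∏ j ∈ Finset.Icc 1 (α i), X (F i j)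

/-- The Demazure operator `π_r(f) = ∂_r(x_r f)`, characterized by
`(x_r - x_{r+1}) · π_r(f) = x_r f - x_{r+1} · (s_r f)`. -/
def demazure (r : ℕ) (f : MvPolynomial ℕ ℤ) : MvPolynomial ℕ ℤ :=
  if h : ∃ g, (X r - X (r+1)) * g
      = X r * f - X (r+1) * (rename (Equiv.swap r (r+1)) f)
  then h.choose else 0

/-- The composition obtained from `α` by interchanging `α r` and `α (r+1)`. -/
def swapComp (α : ℕ → ℕ) (r : ℕ) : ℕ → ℕ :=
  fun i => if i = r then α (r+1) else if i = r+1 then α r else α i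

/-- Auxiliary fuelled recursion for the key polynomial: if `α` is not a
partition, apply the Demazure operator `π_i` at the first ascent `i` of `α`
to the key polynomial of the composition with `α i` and `α (i+1)`
interchanged; if `α` is a partition, return `x₁^{α₁} ⋯ xₙ^{αₙ}`. -/
def keyAux (n : ℕ) : ℕ → (ℕ → ℕ) → MvPolynomial ℕ ℤ
  | 0, α => ∏ i ∈ Finset.Icc 1 n, (X i : MvPolynomial ℕ ℤ) ^ (α i)
  | (fuel+1), α =>
    if ∃ i, 1 ≤ i ∧ i < n ∧ α i < α (i+1) then
      demazure (sInf {i | 1 ≤ i ∧ i < n ∧ α i < α (i+1)})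
        (keyAux n fuel (swapComp α (sInf {i | 1 ≤ i ∧ i < n ∧ α i < α (i+1)})))
    else ∏ i ∈ Finset.Icc 1 n, (X i : MvPolynomial ℕ ℤ) ^ (α i)

/-- The key polynomial `κ_α` of the composition `α = (α 1, …, α n)`.
(`n * n` exceeds the number of inversions of `α`, so the fuel never runs out.) -/
def key (n : ℕ) (α : ℕ → ℕ) : MvPolynomial ℕ ℤ :=
  keyAux n (n * n) α

/-- `r` is the first ascent of `α`: `α 1 ≥ α 2 ≥ ⋯ ≥ α r` and `α r < α (r+1)`. -/
def FirstAscent (n : ℕ) (α : ℕ → ℕ) (r : ℕ) : Prop :=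
  1 ≤ r ∧ r + 1 ≤ n ∧ (∀ i, 1 ≤ i → i < r → α (i+1) ≤ α i) ∧ α r < α (r+1)

/-- Move the last `α (r+1) - α r` boxes of row `r` of `F'`, together with their
entries, down to row `r+1` (here `F' ∈ SSF(α')` with `α'` obtained from `α` by
interchanging `α r` and `α (r+1)`). -/
def moveDown (α : ℕ → ℕ) (r : ℕ) (F : ℕ → ℕ → ℕ) : ℕ → ℕ → ℕ :=
  fun i j =>
    if i = r ∧ α r < j then 0
    else if i = r + 1 ∧ α r < j then F r j
    else F i j

/-- The set `DF(F') = {F₀, F₁, …, F_m}` of derived fillings of `F' ∈ SSF(α')`,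
where `m` is the number of free entries `r` in row `r` of `F'`, `F₀` is obtained
from `F'` by moving the last `α (r+1) - α r` boxes of row `r` down to row `r+1`,
and `F_k = R_{r+1,r}^k(F₀)`. -/
def DF (n : ℕ) (α : ℕ → ℕ) (r : ℕ) (F' : ℕ → ℕ → ℕ) : Set (ℕ → ℕ → ℕ) :=
  {F | ∃ k, k ≤ {j | FreeT n (swapComp α r) F' r r j}.ncard ∧
    F = (Rop n α (r+1) r)^[k] (moveDown α r F')}


/-- If two boxes in consecutive columns of a semistandard skyline filling carry
equal entries, i.e. `F i j = F i' (j+1)`, then `i ≤ i'`. -/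
theorem stmt0 (n : ℕ) (α : ℕ → ℕ) (F : ℕ → ℕ → ℕ) (hF : IsSSF n α F)
    (i i' j : ℕ) (hb : Box n α i j) (hb' : Box n α i' (j+1))
    (h : F i j = F i' (j+1)) : i ≤ i' := by
  by_contra hlt
  push_neg at hlt
  obtain ⟨h0, h1, h2, h3, h4, h5⟩ := hF
  have hbj : Box n α i' j := ⟨hb'.1, hb'.2.1, hb.2.2.1, le_trans (Nat.le_succ j) hb'.2.2.2⟩
  have hrow : F i' (j+1) ≤ F i' j := h2 i' j hb.2.2.1 hb'
  have hne : F i j ≠ F i' j := h4 i i' j hb hbj (by omega)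
  have hlt2 : F i j < F i' j := lt_of_le_of_ne (h ▸ hrow) hne
  have := (h5 i i' j hb hbj (by omega) hlt2).2
  omega

end Skyline
end
end

section
/- Let F ∈ SSF(α), let t be a positive integer, suppose F(i,j) = t is an unpaired entry, and let i' be a row index with i' < i. Then the following are equivalent: (1) the entry t in box (i,j) is pseudo-free and its associated pseudo-free entry t+1 lies in row i'; (2) F(i',j+1) = t+1. -/
open Classical MvPolynomial

noncomputable section

namespace Skyline

private lemma boxMono {n : ℕ} {α : ℕ → ℕ} {p a b : ℕ} (h : Box n α p b)
    (h1 : 1 ≤ a) (h2 : a ≤ b) : Box n α p a :=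
  ⟨h.1, h.2.1, h1, le_trans h2 h.2.2.2⟩

private lemma boxOfVal {n : ℕ} {α : ℕ → ℕ} {F : ℕ → ℕ → ℕ} (hF : IsSSF n α F)
    {p c : ℕ} (h : F p c ≠ 0) : Box n α p c := by
  by_contra hcon
  exact h (hF.1 p c hcon)

private lemma rowAnti {n : ℕ} {α : ℕ → ℕ} {F : ℕ → ℕ → ℕ} (hF : IsSSF n α F)
    {p a b : ℕ} (hbox : Box n α p b) (h1 : 1 ≤ a) (h2 : a ≤ b) : F p b ≤ F p a := by
  induction b, h2 using Nat.le_induction with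
  | base => exact le_rfl
  | succ b hab ih =>
    have hb' : Box n α p b := boxMono hbox (le_trans h1 hab) (Nat.le_succ b)
    exact le_trans (hF.2.2.1 p b (le_trans h1 hab) hbox) (ih hb')

/-- If row `q < i` carries `t+1` on all columns in `(j, c]`, then any `t` in
column `c` lies strictly below row `q`. -/
private lemma notAbove {n : ℕ} {α : ℕ → ℕ} {F : ℕ → ℕ → ℕ} (hF : IsSSF n α F)
    {t i j : ℕ} (hb : Box n α i j) (hval : F i j = t)
    (hunp : ¬ ColContains n α F j (t+1))
    {q c p : ℕ} (hqi : q < i) (hjc : j < c) (hqc : Box n α q c)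
    (hinv : ∀ m, j < m → m ≤ c → F q m = t+1)
    (hpc : Box n α p c) (hFp : F p c = t) : q < p := by
  obtain ⟨hz, hpos, hrow, hflag, hdist, hiv⟩ := hF
  have hFq : IsSSF n α F := ⟨hz, hpos, hrow, hflag, hdist, hiv⟩
  have hne : p ≠ q := by
    intro h
    have := hinv c hjc le_rfl
    rw [h, this] at hFp; omega
  rcases Nat.lt_or_ge q p with h | h
  · exact h
  have hpq : p < q := lt_of_le_of_ne h hne
  exfalso
  have hpi : p ≠ i := by omega
  have hBpj : Box n α p j := boxMono hpc hb.2.2.1 (le_of_lt hjc)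
  have hgej : F p c ≤ F p j := rowAnti hFq hpc hb.2.2.1 (le_of_lt hjc)
  have hnej1 : F p j ≠ t := by
    intro hcontra
    exact hdist p i j hBpj hb hpi (by rw [hcontra, hval])
  have hnej2 : F p j ≠ t + 1 := by
    intro hcontra
    exact hunp ⟨p, hBpj, hcontra⟩
  have ht2 : t + 2 ≤ F p j := by omega
  have hSne : (c - 1) ∈ {m | j ≤ m ∧ F p (m+1) ≤ t+1} := by
    constructor
    · omega
    · have : c - 1 + 1 = c := by omega
      rw [this, hFp]; omega
  set m₁ := sInf {m | j ≤ m ∧ F p (m+1) ≤ t+1} with hm₁def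
  have hm₁mem : m₁ ∈ {m | j ≤ m ∧ F p (m+1) ≤ t+1} := Nat.sInf_mem ⟨c - 1, hSne⟩
  have hm₁le : m₁ ≤ c - 1 := Nat.sInf_le hSne
  have hm₁ge : j ≤ m₁ := hm₁mem.1
  have hup : F p c ≤ F p (m₁ + 1) := rowAnti hFq hpc (by omega) (by omega)
  have hdropge : t + 2 ≤ F p m₁ := by
    rcases Nat.eq_or_lt_of_le hm₁ge with heq | hlt
    · rw [← heq]; exact ht2
    · by_contra hcontra
      have hmem : m₁ - 1 ∈ {m | j ≤ m ∧ F p (m+1) ≤ t+1} := by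
        constructor
        · omega
        · have : m₁ - 1 + 1 = m₁ := by omega
          rw [this]; omega
      have := Nat.sInf_le hmem
      omega
  have hcases : F p (m₁ + 1) = t ∨ F p (m₁ + 1) = t + 1 := by
    rw [hFp] at hup; have := hm₁mem.2; omega
  rcases hcases with hdrop | hdrop
  · rcases Nat.eq_or_lt_of_le hm₁ge with heq | hlt
    · obtain ⟨_, hlt2⟩ := hiv i p j hb hBpj (by omega) (by rw [hval]; omega)
      rw [hval] at hlt2
      rw [← heq] at hdrop
      omega
    · have hq1 : F q m₁ = t + 1 := hinv m₁ hlt (by omega)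
      have := hiv q p m₁ (boxMono hqc (by omega) (by omega))
        (boxMono hpc (by omega) (by omega)) hpq (by rw [hq1]; omega)
      rw [hq1, hdrop] at this
      omega
  · have hq1 : F q (m₁ + 1) = t + 1 := hinv (m₁ + 1) (by omega) (by omega)
    exact hdist p q (m₁ + 1) (boxMono hpc (by omega) (by omega))
      (boxMono hqc (by omega) (by omega)) hne (by rw [hdrop, hq1]) 

/-- Rightward propagation step: the entry `t+1` in row `q` extends one column. -/
private lemma stepT {n : ℕ} {α : ℕ → ℕ} {F : ℕ → ℕ → ℕ} (hF : IsSSF n α F)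
    {t i j : ℕ} (hb : Box n α i j) (hval : F i j = t)
    (hunp : ¬ ColContains n α F j (t+1))
    {q c : ℕ} (hqi : q < i) (hjc : j < c) (hqc : Box n α q c)
    (hinv : ∀ m, j < m → m ≤ c → F q m = t+1)
    (hcol : ColContains n α F c t) :
    Box n α q (c+1) ∧ F q (c+1) = t+1 := by
  obtain ⟨p, hpB, hpF⟩ := hcol
  have hqp : q < p := notAbove hF hb hval hunp hqi hjc hqc hinv hpB hpF
  have hqcv : F q c = t + 1 := hinv c hjc le_rfl
  obtain ⟨hbox1, hlt⟩ := hF.2.2.2.2.2 p q c hpB hqc hqp (by rw [hpF, hqcv]; omega)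
  rw [hpF] at hlt
  have hle : F q (c+1) ≤ F q c := hF.2.2.1 q c (by have := hb.2.2.1; omega) hbox1
  rw [hqcv] at hle
  exact ⟨hbox1, by omega⟩

private lemma backAux {n : ℕ} {α : ℕ → ℕ} {F : ℕ → ℕ → ℕ} (hF : IsSSF n α F)
    {t i j i' : ℕ} (hb : Box n α i j) (hval : F i j = t)
    (hunp : ¬ ColContains n α F j (t+1)) (hi' : i' < i) :
    ∀ d c, α i' + 1 - c ≤ d → j < c → Box n α i' c →
      (∀ m, j < m → m ≤ c → F i' m = t+1) →
      (∀ k, j < k → k < c → ColContains n α F k t) →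
      ∃ j', PseudoFreePair n α F t i j i' j' := by
  intro d
  induction d with
  | zero =>
    intro c hd hjc hbox _ _
    have := hbox.2.2.2
    omega
  | succ d ih =>
    intro c hd hjc hbox hinv hcont
    by_cases h : ColContains n α F c t
    · obtain ⟨hbox1, hval1⟩ := stepT hF hb hval hunp hi' hjc hbox hinv h
      refine ih (c+1) (by have := hbox.2.2.2; omega) (by omega) hbox1 ?_ ?_
      · intro m hm1 hm2
        rcases Nat.lt_or_ge m (c+1) with hm | hm
        · exact hinv m hm1 (by omega)
        · have : m = c + 1 := by omega
          rw [this]; exact hval1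
      · intro k hk1 hk2
        rcases Nat.lt_or_ge k c with hk | hk
        · exact hcont k hk1 hk
        · have : k = c := by omega
          rw [this]; exact h
    · exact ⟨c, hb, hval, hunp, hbox, hinv c hjc le_rfl, h, hi', hjc,
        fun k hk1 hk2 => ⟨hcont k hk1 hk2,
          ⟨i', boxMono hbox (by omega) (by omega), hinv k hk1 (by omega)⟩⟩⟩

/-- Leftward descent: from a `t+1` in row `q ≤ i'` at some intermediate column,
find a `t+1` in column `j+1` in some row `q' ≤ i'`. -/
private lemma descAux {n : ℕ} {α : ℕ → ℕ} {F : ℕ → ℕ → ℕ} (hF : IsSSF n α F)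
    {t i j i' j'' : ℕ} (hb : Box n α i j) (hunp : ¬ ColContains n α F j (t+1))
    (hbetween : ∀ k, j < k → k < j'' → ColContains n α F k (t+1)) :
    ∀ q, q ≤ i' → ∀ c, j < c → c ≤ j'' → F q c = t+1 →
      ∃ q', q' ≤ i' ∧ F q' (j+1) = t+1 := by
  intro q
  induction q using Nat.strong_induction_on with
  | _ q IH =>
  intro hqi c hjc hcj hFqc
  have hboxc : Box n α q c := boxOfVal hF (by rw [hFqc]; omega)
  have hcS : c ∈ {m | j < m ∧ F q m = t+1} := ⟨hjc, hFqc⟩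
  have hμmem : sInf {m | j < m ∧ F q m = t+1} ∈ {m | j < m ∧ F q m = t+1} :=
    Nat.sInf_mem ⟨c, hcS⟩
  set μ := sInf {m | j < m ∧ F q m = t+1} with hμdef
  have hμc : μ ≤ c := Nat.sInf_le hcS
  have hboxμ : Box n α q μ := boxOfVal hF (by rw [hμmem.2]; omega)
  rcases Nat.eq_or_lt_of_le (show j + 1 ≤ μ by have := hμmem.1; omega) with heq | hμ2
  · exact ⟨q, hqi, by rw [heq]; exact hμmem.2⟩
  · have hb1 : Box n α q (μ-1) := boxMono hboxμ (by have := hb.2.2.1; omega) (by omega)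
    have hge : F q μ ≤ F q (μ-1) := rowAnti hF hboxμ (by have := hb.2.2.1; omega) (by omega)
    have hne1 : F q (μ-1) ≠ t+1 := by
      intro hcontra
      have hmem : μ - 1 ∈ {m | j < m ∧ F q m = t+1} := ⟨by omega, hcontra⟩
      have := Nat.sInf_le hmem
      omega
    have h2 : t + 2 ≤ F q (μ-1) := by rw [hμmem.2] at hge; omega
    obtain ⟨q₁, hq1B, hq1F⟩ := hbetween (μ-1) (by omega) (by omega)
    have hne2 : q₁ ≠ q := by
      intro h
      rw [h] at hq1F
      omega
    have hlt : q₁ < q := by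
      by_contra hcon
      have hqq : q < q₁ := by omega
      obtain ⟨_, hlt'⟩ := hF.2.2.2.2.2 q₁ q (μ-1) hq1B hb1 hqq (by rw [hq1F]; omega)
      rw [hq1F] at hlt'
      have hμ1 : μ - 1 + 1 = μ := by omega
      rw [hμ1, hμmem.2] at hlt'
      omega
    exact IH q₁ hlt (by omega) (μ-1) (by omega) (by omega) hq1F

private lemma propAux {n : ℕ} {α : ℕ → ℕ} {F : ℕ → ℕ → ℕ} (hF : IsSSF n α F)
    {t i j j'' q' : ℕ} (hb : Box n α i j) (hval : F i j = t)
    (hunp : ¬ ColContains n α F j (t+1)) (hq'i : q' < i)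
    (hbetween : ∀ k, j < k → k < j'' → ColContains n α F k t) :
    ∀ d c, j'' - c ≤ d → j < c → c ≤ j'' → Box n α q' c →
      (∀ m, j < m → m ≤ c → F q' m = t+1) → F q' j'' = t+1 := by
  intro d
  induction d with
  | zero =>
    intro c hd hjc hcj hbox hinv
    have : c = j'' := by omega
    rw [← this]; exact hinv c hjc le_rfl
  | succ d ih =>
    intro c hd hjc hcj hbox hinv
    rcases Nat.eq_or_lt_of_le hcj with h | h
    · rw [← h]; exact hinv c hjc le_rfl
    · obtain ⟨hbox1, hval1⟩ := stepT hF hb hval hunp hq'i hjc hbox hinv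
        (hbetween c hjc h)
      refine ih (c+1) (by omega) (by omega) (by omega) hbox1 ?_
      intro m hm1 hm2
      rcases Nat.lt_or_ge m (c+1) with hm | hm
      · exact hinv m hm1 (by omega)
      · have : m = c + 1 := by omega
        rw [this]; exact hval1

/-- For an unpaired entry `t` in box `(i,j)` and a row index `i' < i`, the entry
`t` is pseudo-free with associated pseudo-free entry `t+1` in row `i'` if and
only if `F i' (j+1) = t+1`. -/
theorem stmt1 (n : ℕ) (α : ℕ → ℕ) (F : ℕ → ℕ → ℕ) (hF : IsSSF n α F)
    (t : ℕ) (ht : 1 ≤ t) (i j i' : ℕ) (hb : Box n α i j)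
    (hval : F i j = t) (hunp : ¬ ColContains n α F j (t+1)) (hi' : i' < i) :
    (∃ j', PseudoFreePair n α F t i j i' j') ↔ F i' (j+1) = t + 1 := by
  constructor
  · rintro ⟨j'', hBij, hFij, hun1, hBj'', hFj'', hnoT, hii', hjj', hbet⟩
    obtain ⟨q', hq'le, hq'F⟩ := descAux hF hb hunp (fun k h1 h2 => (hbet k h1 h2).2)
      i' le_rfl j'' hjj' le_rfl hFj''
    have hq'i : q' < i := lt_of_le_of_lt hq'le hi'
    have hboxq'1 : Box n α q' (j+1) := boxOfVal hF (by rw [hq'F]; omega)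
    have hfinal : F q' j'' = t + 1 :=
      propAux hF hb hval hunp hq'i (fun k h1 h2 => (hbet k h1 h2).1)
        (j'' - (j+1)) (j+1) le_rfl (by omega) (by omega) hboxq'1
        (fun m hm1 hm2 => by
          have : m = j + 1 := by omega
          rw [this]; exact hq'F)
    have hq'eq : q' = i' := by
      by_contra hcon
      exact hF.2.2.2.2.1 q' i' j'' (boxOfVal hF (by rw [hfinal]; omega)) hBj''
        hcon (by rw [hfinal, hFj''])
    rw [← hq'eq]; exact hq'F
  · intro hEq
    have hbox1 : Box n α i' (j+1) := boxOfVal hF (by rw [hEq]; omega)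
    exact backAux hF hb hval hunp hi' (α i' + 1 - (j+1)) (j+1) le_rfl (by omega)
      hbox1
      (fun m hm1 hm2 => by
        have : m = j + 1 := by omega
        rw [this]; exact hEq)
      (fun k hk1 hk2 => by omega)

end Skyline
end
end

section
/- Let F ∈ SSF(α), let t be a positive integer, and let r ≥ t be a row index. Then the skyline filling L_{r,t}(F) obtained by applying the lowering operator to F has weakly decreasing entries from left to right in every row. -/
open Classical MvPolynomial

noncomputable section

namespace Skyline

section Aux

variable {n : ℕ} {α : ℕ → ℕ} {F : ℕ → ℕ → ℕ}

lemma box_of_pos (hF : IsSSF n α F) {i j : ℕ} (h : 1 ≤ F i j) : Box n α i j := by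
  by_contra hn
  have := hF.1 i j hn
  omega

lemma box_left {i j : ℕ} (h : Box n α i (j+1)) (hj : 1 ≤ j) : Box n α i j :=
  ⟨h.1, h.2.1, hj, by have := h.2.2.2; omega⟩

/-- Leftward induction: a `t` strictly above row `r` in some column `d ≥ j`,
while `F r m = t+1` for all `j ≤ m ≤ d` and column `j` contains no `t`,
is impossible. -/
lemma left_lemma (hF : IsSSF n α F) {t r j : ℕ} (ht : 1 ≤ t)
    (hnc : ¬ ColContains n α F j t) (hj : 1 ≤ j) :
    ∀ k d i₀, d = j + k → i₀ < r → F i₀ d = t →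
      (∀ m, j ≤ m → m ≤ d → F r m = t + 1) → False := by
  intro k
  induction k with
  | zero =>
    intro d i₀ hd _ hv _
    subst hd
    exact hnc ⟨i₀, box_of_pos hF (by omega), by simpa using hv⟩
  | succ k ih =>
    intro d i₀ hd hir hv hall
    have hbd : Box n α i₀ d := box_of_pos hF (by omega)
    have hd1 : d - 1 = j + k := by omega
    have hdd : d - 1 + 1 = d := by omega
    have hbd1 : Box n α i₀ (d-1) := box_left (hdd ▸ hbd) (by omega)
    have hdec : F i₀ d ≤ F i₀ (d-1) := by
      have h3 := hF.2.2.1 i₀ (d-1) (by omega) (by rw [hdd]; exact hbd)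
      rwa [hdd] at h3
    by_cases he : F i₀ (d-1) = t
    · exact ih (d-1) i₀ hd1 hir he (fun m h1 h2 => hall m h1 (by omega))
    · have hrd1 : F r (d-1) = t + 1 := hall (d-1) (by omega) (by omega)
      have hbr : Box n α r (d-1) := box_of_pos hF (by omega)
      have hne : F i₀ (d-1) ≠ t + 1 :=
        fun h => hF.2.2.2.2.1 i₀ r (d-1) hbd1 hbr (by omega) (by omega)
      obtain ⟨-, h7⟩ := hF.2.2.2.2.2 r i₀ (d-1) hbr hbd1 hir (by omega)
      rw [hdd] at h7
      omega

/-- One rightward step: if `F r c = t+1` for a column `c` strictly right of the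
rightmost free `t+1`, then also `F r (c+1) = t+1` (and the box exists). -/
lemma step_lemma (hF : IsSSF n α F) {t r j : ℕ} (ht : 1 ≤ t)
    (hfree : FreeTp1 n α F t r j)
    (hjmax : ∀ c, FreeTp1 n α F t r c → c ≤ j) :
    ∀ c, j < c → F r c = t + 1 →
      (∀ m, j ≤ m → m < c → F r m = t + 1) →
      F r (c+1) = t + 1 ∧ c + 1 ≤ α r := by
  intro c hc hvc hall
  have hj1 : 1 ≤ j := hfree.1.2.2.1
  have hbrc : Box n α r c := box_of_pos hF (by omega)
  have hnotfree : ¬ FreeTp1 n α F t r c := fun h => by have := hjmax c h; omega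
  by_cases hcol : ColContains n α F c t
  · obtain ⟨i₀, hb₀, hv₀⟩ := hcol
    have hne : i₀ ≠ r := fun h => by rw [h] at hv₀; omega
    rcases lt_or_gt_of_ne hne with hlt | hgt
    · exact (left_lemma hF ht hfree.2.2.1 hj1 (c - j) c i₀ (by omega) hlt hv₀
        (fun m h1 h2 => by
          rcases eq_or_lt_of_le h2 with he | hl
          · rw [he]; exact hvc
          · exact hall m h1 hl)).elim
    · obtain ⟨hb1, hlt1⟩ := hF.2.2.2.2.2 i₀ r c hb₀ hbrc hgt (by omega)
      have hdec := hF.2.2.1 r c (by omega) hb1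
      exact ⟨by omega, hb1.2.2.2⟩
  · have hps : ∃ i₀ j₀, PseudoFreePair n α F t i₀ j₀ r c := by
      by_contra hps
      exact hnotfree ⟨hbrc, hvc, hcol, hps⟩
    obtain ⟨i₀, j₀, hb₀, hv₀, hnc₀, -, -, -, hri₀, hj₀c, hbet⟩ := hps
    rcases lt_trichotomy j₀ j with h1 | h1 | h1
    · exact absurd ((hbet j h1 hc).1) hfree.2.2.1
    · subst h1
      exact absurd ⟨i₀, hb₀, hv₀⟩ hfree.2.2.1
    · have hvj₀ : F r j₀ = t + 1 := hall j₀ (by omega) hj₀c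
      exact absurd ⟨r, box_of_pos hF (by omega), hvj₀⟩ hnc₀

/-- Rightward induction: there is no column strictly right of the rightmost free
`t+1` in row `r` carrying `t+1` with all intermediate entries equal to `t+1`. -/
lemma right_lemma (hF : IsSSF n α F) {t r j : ℕ} (ht : 1 ≤ t)
    (hfree : FreeTp1 n α F t r j)
    (hjmax : ∀ c, FreeTp1 n α F t r c → c ≤ j) :
    ∀ k c, α r ≤ c + k → j < c → F r c = t + 1 →
      (∀ m, j ≤ m → m < c → F r m = t + 1) → False := by
  intro k
  induction k with
  | zero =>
    intro c h hc hv hall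
    obtain ⟨-, h2⟩ := step_lemma hF ht hfree hjmax c hc hv hall
    omega
  | succ k ih =>
    intro c h hc hv hall
    obtain ⟨h1, h2⟩ := step_lemma hF ht hfree hjmax c hc hv hall
    exact ih (c+1) (by omega) (by omega) h1 (fun m hm1 hm2 => by
      rcases eq_or_lt_of_le (Nat.lt_succ_iff.mp hm2) with he | hl
      · rw [he]; exact hv
      · exact hall m hm1 hl)

/-- The boundary contradiction: a `t` strictly below row `r` in column `c`,
where columns `c+1, …, j-1` all carry `t+1` in row `r` with a `t` below, but
column `c` itself does not, contradicts freeness of the `t+1` at `(r,j)`. -/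
lemma c_lemma (hF : IsSSF n α F) {t r j c i : ℕ} (ht : 1 ≤ t)
    (hfree : FreeTp1 n α F t r j)
    (hc1 : 1 ≤ c) (hcj : c + 1 < j)
    (hall : ∀ k, c < k → k < j →
      F r k = t + 1 ∧ ∃ i', r < i' ∧ Box n α i' k ∧ F i' k = t)
    (hnc : ¬ (F r c = t + 1 ∧ ∃ i', r < i' ∧ Box n α i' c ∧ F i' c = t))
    (hit : F i c = t) (hri : r < i) : False := by
  have hrc1 : F r (c+1) = t + 1 := (hall (c+1) (by omega) hcj).1
  have hbrc1 : Box n α r (c+1) := box_of_pos hF (by omega)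
  have hdec : F r (c+1) ≤ F r c := hF.2.2.1 r c hc1 hbrc1
  have hbic : Box n α i c := box_of_pos hF (by omega)
  have hbrc : Box n α r c := box_of_pos hF (by omega)
  have hrcne : F r c ≠ t + 1 := fun h =>
    hnc ⟨h, i, hri, hbic, hit⟩
  by_cases hcol : ColContains n α F c (t+1)
  · obtain ⟨i₂, hb₂, hv₂⟩ := hcol
    have hne2 : i₂ ≠ r := fun h => hrcne (h ▸ hv₂)
    rcases lt_trichotomy i₂ i with h2 | h2 | h2
    · obtain ⟨hbb, hlt⟩ := hF.2.2.2.2.2 i i₂ c hbic hb₂ h2 (by omega)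
      have hd2 : F i₂ (c+1) ≤ F i₂ c := hF.2.2.1 i₂ c hc1 hbb
      exact hF.2.2.2.2.1 i₂ r (c+1) hbb hbrc1 hne2 (by omega)
    · subst h2; omega
    · obtain ⟨hbb, hlt⟩ := hF.2.2.2.2.2 i₂ r c hb₂ hbrc (by omega) (by omega)
      omega
  · refine hfree.2.2.2 ⟨i, c, hbic, hit, hcol, hfree.1, hfree.2.1, hfree.2.2.1,
      hri, by omega, ?_⟩
    intro k hk1 hk2
    obtain ⟨h1, i', hi', hb', h2⟩ := hall k hk1 hk2
    exact ⟨⟨i', hb', h2⟩, ⟨r, box_of_pos hF (by omega), h1⟩⟩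

end Aux


/-- The lowering operator `L_{r,t}` preserves condition (i): entries of
`L_{r,t}(F)` weakly decrease from left to right in every row. -/
theorem stmt2 (n : ℕ) (α : ℕ → ℕ) (F : ℕ → ℕ → ℕ) (hF : IsSSF n α F)
    (t r : ℕ) (ht : 1 ≤ t) (hrt : t ≤ r) :
    ∀ i j, 1 ≤ j → Box n α i (j+1) →
      Lop n α r t F i (j+1) ≤ Lop n α r t F i j := by
  intro i c hc hbox
  by_cases hne : {j | FreeTp1 n α F t r j}.Nonempty
  · simp only [Lop, if_pos hne]
    set j := sSup {j | FreeTp1 n α F t r j} with hjdef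
    set S : Set ℕ := {k | k < j ∧ ∀ (m : ℕ), k ≤ m → m < j →
      F r m = t + 1 ∧ ∃ i, r < i ∧ Box n α i m ∧ F i m = t} with hSdef
    have hbdd : BddAbove {j | FreeTp1 n α F t r j} :=
      ⟨α r, fun x hx => hx.1.2.2.2⟩
    have hjfree : FreeTp1 n α F t r j := Nat.sSup_mem hne hbdd
    have hjmax : ∀ c', FreeTp1 n α F t r c' → c' ≤ j :=
      fun c' h => le_csSup hbdd h
    have hj1 : 1 ≤ j := hjfree.1.2.2.1
    have hFrj : F r j = t + 1 := hjfree.2.1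
    have hSmem : ∀ k, k ∈ S →
        F r k = t + 1 ∧ k < j ∧ ∃ i', r < i' ∧ Box n α i' k ∧ F i' k = t := by
      intro k hk
      obtain ⟨h1, h2⟩ := hk
      exact ⟨(h2 k le_rfl h1).1, h1, (h2 k le_rfl h1).2⟩
    have hSclosed : ∀ k, k ∈ S → ∀ k', k ≤ k' → k' < j → k' ∈ S := by
      intro k hk k' h1 h2
      exact ⟨h2, fun m hm1 hm2 => hk.2 m (le_trans h1 hm1) hm2⟩
    have hSnotp1 : ∀ k, k ∈ S → ∀ i', i' ≠ r → F i' k ≠ t + 1 := by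
      intro k hk i' hne' hval'
      have h1 := (hSmem k hk).1
      exact hF.2.2.2.2.1 i' r k (box_of_pos hF (by omega))
        (box_of_pos hF (by omega)) hne' (by omega)
    have hrowdec : F i (c+1) ≤ F i c := hF.2.2.1 i c hc hbox
    split_ifs with h1 h2 h3 h4 h5 h6 h7 h8 h9 h10 h11 h12 h13 h14 h15
    -- 1 : A, D : t ≤ t
    · omega
    -- 2 : A, ¬D, E : t ≤ t+1
    · omega
    -- 3 : A, ¬D, ¬E, G : t ≤ t
    · omega
    -- 4 : A, ¬D, ¬E, ¬G : t ≤ F i c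
    · obtain ⟨ha, hb⟩ := h1
      subst ha
      rw [← hb] at hFrj
      omega
    -- 5 : ¬A, B, D : t+1 ≤ t
    · exfalso
      have := (hSmem (c+1) h5.1).2.1
      omega
    -- 6 : ¬A, B, ¬D, E : t+1 ≤ t+1
    · omega
    -- 7 : ¬A, B, ¬D, ¬E, G : t+1 ≤ t
    · exfalso
      by_cases hir : i = r
      · have h5' := h5.2
        rw [hir] at h5'
        have := (hSmem (c+1) h5.1).1
        omega
      · exact hSnotp1 c h8.1 i hir h8.2
    -- 8 : ¬A, B, ¬D, ¬E, ¬G : t+1 ≤ F i c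
    · by_cases hfc : F i c = t
      · exfalso
        obtain ⟨hv1, hlt1, i₁, hri₁, hbx₁, hvi₁⟩ := hSmem (c+1) h5.1
        have hirn : i ≠ r := by
          intro h
          have h5' := h5.2
          rw [h] at h5'
          omega
        have hii : i = i₁ := by
          by_contra hne'
          exact hF.2.2.2.2.1 i i₁ (c+1) hbox hbx₁ hne' (by omega)
        have hri : r < i := hii ▸ hri₁
        have hall : ∀ k, c < k → k < j →
            F r k = t + 1 ∧ ∃ i', r < i' ∧ Box n α i' k ∧ F i' k = t :=
          fun k hk1 hk2 =>
            (hSclosed (c+1) h5.1 k (by omega) hk2).2 k le_rfl hk2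
        have hnc : ¬ (F r c = t + 1 ∧
            ∃ i', r < i' ∧ Box n α i' c ∧ F i' c = t) := by
          rintro ⟨ha, hb⟩
          apply h7
          refine ⟨⟨by omega, fun m hm1 hm2 => ?_⟩, hfc⟩
          rcases eq_or_lt_of_le hm1 with he | hl
          · rw [← he]; exact ⟨ha, hb⟩
          · exact hall m hl hm2
        exact c_lemma hF ht hjfree hc hlt1 hall hnc hfc hri
      · have := h5.2
        omega
    -- 9 : ¬A, ¬B, C, D : t ≤ t
    · omega
    -- 10 : ¬A, ¬B, C, ¬D, E : t ≤ t+1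
    · omega
    -- 11 : ¬A, ¬B, C, ¬D, ¬E, G : t ≤ t
    · omega
    -- 12 : ¬A, ¬B, C, ¬D, ¬E, ¬G : t ≤ F i c
    · have := h9.2
      omega
    -- 13 : ¬A, ¬B, ¬C, D : F i (c+1) ≤ t
    · obtain ⟨ha, hb⟩ := h13
      rw [ha, hb]
      rw [ha, hb] at hrowdec
      by_contra hcon
      exact right_lemma hF ht hjfree hjmax (α r) (j+1) (by omega) (by omega)
        (by omega) (fun m hm1 hm2 => by
          have hmj : m = j := by omega
          rw [hmj]; exact hFrj)
    -- 14 : ¬A, ¬B, ¬C, ¬D, E : F i (c+1) ≤ t+1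
    · have := h14.2
      omega
    -- 15 : ¬A, ¬B, ¬C, ¬D, ¬E, G : F i (c+1) ≤ t
    · exfalso
      have hir : i = r := by
        by_contra h
        exact hSnotp1 c h15.1 i h h15.2
      subst hir
      have hcj := (hSmem c h15.1).2.1
      rcases eq_or_lt_of_le (Nat.succ_le_of_lt hcj) with he | hl
      · exact h1 ⟨rfl, he⟩
      · have hm : (c+1) ∈ S := hSclosed c h15.1 (c+1) (by omega) hl
        have hv := (hSmem (c+1) hm).1
        exact h9 ⟨hm, hv⟩
    -- 16 : no changes
    · exact hrowdec
  · simp only [Lop, if_neg hne]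
    exact hF.2.2.1 i c hc hbox

end Skyline
end
end

section
/- Let F ∈ SSF(α), let t be a positive integer, and let r ≥ t be a row index. Then the skyline filling L_{r,t}(F) obtained by applying the lowering operator to F satisfies condition (iv): whenever an entry a lies strictly below an entry b in the same column with a < b, the box immediately to the right of b belongs to D(α) and its entry c satisfies a < c. -/
open Classical MvPolynomial

noncomputable section

namespace Skyline

/-- The lowering operator `L_{r,t}` preserves condition (iv): whenever an entry
of `L_{r,t}(F)` lies strictly below a larger entry in the same column, the box
immediately to the right of the larger entry is in the diagram and its entry is
strictly larger than the lower entry. -/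
theorem stmt3 (n : ℕ) (α : ℕ → ℕ) (F : ℕ → ℕ → ℕ) (hF : IsSSF n α F)
    (t r : ℕ) (ht : 1 ≤ t) (hrt : t ≤ r) :
    ∀ i i' j, Box n α i j → Box n α i' j → i' < i →
      Lop n α r t F i j < Lop n α r t F i' j →
      Box n α i' (j+1) ∧ Lop n α r t F i j < Lop n α r t F i' (j+1) := by
  classical
  obtain ⟨hF0, hF1, hFrow, hFflag, hFdist, hFiv⟩ := hF
  by_cases hNE : {j | FreeTp1 n α F t r j}.Nonempty
  case neg =>
    intro i i' c hBi hBi' hii hab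
    simp only [Lop, if_neg hNE] at hab ⊢
    exact hFiv i i' c hBi hBi' hii hab
  case pos =>
    set J := sSup {j | FreeTp1 n α F t r j} with hJdef
    have hJmem : FreeTp1 n α F t r J := Nat.sSup_mem hNE ⟨α r, fun x hx => hx.1.2.2.2⟩
    obtain ⟨hBrJ, hFrJ, hJnot, hJnpf⟩ := hJmem
    set P : ℕ → Prop := fun k => k < J ∧ ∀ m, k ≤ m → m < J →
      F r m = t + 1 ∧ ∃ i, r < i ∧ Box n α i m ∧ F i m = t with hPdef
    have hG : ∀ x y, Lop n α r t F x y =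
        if x = r ∧ y = J then t
        else if P y ∧ F x y = t then t + 1
        else if P y ∧ F x y = t + 1 then t
        else F x y := by
      intro x y
      simp only [Lop, if_pos hNE]
      rfl
    have uniq : ∀ i₁ i₂ c, Box n α i₁ c → Box n α i₂ c → F i₁ c = F i₂ c → i₁ = i₂ := by
      intro i₁ i₂ c h1 h2 hv
      by_contra hne
      exact hFdist i₁ i₂ c h1 h2 hne hv
    have hBr : ∀ c, 1 ≤ c → c ≤ J → Box n α r c :=
      fun c h1 h2 => ⟨le_trans ht hrt, hBrJ.2.1, h1, le_trans h2 hBrJ.2.2.2⟩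
    have hP_cond : ∀ k, P k → F r k = t + 1 ∧ ∃ i, r < i ∧ Box n α i k ∧ F i k = t :=
      fun k hk => hk.2 k le_rfl hk.1
    have hP_mono : ∀ k k', P k → k ≤ k' → k' < J → P k' :=
      fun k k' hk hle hlt => ⟨hlt, fun m hm1 hm2 => hk.2 m (le_trans hle hm1) hm2⟩
    have hrowJ : ∀ m, P m ∨ m = J → F r m = t + 1 := by
      rintro m (hm | rfl)
      · exact (hP_cond m hm).1
      · exact hFrJ
    have hsucc : ∀ c, P c → P (c+1) ∨ c + 1 = J := by
      intro c hc
      rcases eq_or_lt_of_le (Nat.succ_le_of_lt hc.1) with h | h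
      · exact Or.inr h
      · exact Or.inl (hP_mono c (c+1) hc (Nat.le_succ c) h)
    have uniq_t1 : ∀ c i, P c ∨ c = J → Box n α i c → F i c = t + 1 → i = r := by
      intro c i hcs hBic hv
      have hcJ : c ≤ J := by
        rcases hcs with h | rfl
        · exact h.1.le
        · exact le_rfl
      exact uniq i r c hBic (hBr c hBic.2.2.1 hcJ) (hv.trans (hrowJ c hcs).symm)
    -- value computation helpers
    have hG_rJ : Lop n α r t F r J = t := by rw [hG]; exact if_pos ⟨rfl, rfl⟩
    have hG_swap_t : ∀ x y, P y → F x y = t → Lop n α r t F x y = t + 1 := by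
      intro x y hy hv
      rw [hG, if_neg (fun h => (ne_of_lt hy.1) h.2), if_pos ⟨hy, hv⟩]
    have hG_swap_t1 : ∀ x y, P y → F x y = t + 1 → Lop n α r t F x y = t := by
      intro x y hy hv
      rw [hG, if_neg (fun h => (ne_of_lt hy.1) h.2),
        if_neg (fun h : P y ∧ F x y = t => by omega), if_pos ⟨hy, hv⟩]
    have hG_other : ∀ x y, ¬(x = r ∧ y = J) → (P y → F x y ≠ t ∧ F x y ≠ t + 1) →
        Lop n α r t F x y = F x y := by
      intro x y h1 h2
      rw [hG, if_neg h1]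
      by_cases hp : P y
      · rw [if_neg (fun h => (h2 hp).1 h.2), if_neg (fun h => (h2 hp).2 h.2)]
      · rw [if_neg (fun h => hp h.1), if_neg (fun h => hp h.1)]
    -- the key pseudo-free lemma
    have key : ∀ i c, r < i → Box n α i c → F i c = t → c < J →
        (∀ m, c < m → m < J → P m) → P c := by
      intro i c hri hBic hvic hcJ hmid
      have hc1 : 1 ≤ c := hBic.2.2.1
      have hBrc : Box n α r c := hBr c hc1 hcJ.le
      have hBrc1 : Box n α r (c+1) := hBr (c+1) (Nat.le_succ_of_le hc1) hcJ
      have hs : P (c+1) ∨ c + 1 = J := by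
        rcases eq_or_lt_of_le (Nat.succ_le_of_lt hcJ) with h | h
        · exact Or.inr h
        · exact Or.inl (hmid (c+1) (Nat.lt_succ_self c) h)
      have hFrc1 : F r (c+1) = t + 1 := hrowJ (c+1) hs
      have hge : t + 1 ≤ F r c := hFrc1 ▸ hFrow r c hc1 hBrc1
      by_cases heq : F r c = t + 1
      · refine ⟨hcJ, fun m hm1 hm2 => ?_⟩
        rcases eq_or_lt_of_le hm1 with rfl | h
        · exact ⟨heq, i, hri, hBic, hvic⟩
        · exact hP_cond m (hmid m h hm2)
      · have hgt : t + 1 < F r c := lt_of_le_of_ne hge (Ne.symm heq)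
        have hnocol : ¬ ColContains n α F c (t+1) := by
          rintro ⟨i'', hB'', hv''⟩
          rcases lt_trichotomy i'' i with h | rfl | h
          · obtain ⟨hB1, hlt1⟩ := hFiv i i'' c hBic hB'' h (by omega)
            have h2 : F i'' (c+1) ≤ t + 1 := hv'' ▸ hFrow i'' c hc1 hB1
            have h4 : F i'' (c+1) = t + 1 := by omega
            have h3 : i'' = r := uniq i'' r (c+1) hB1 hBrc1 (by rw [h4, hFrc1])
            rw [h3] at hv''
            omega
          · omega
          · have hri'' : r < i'' := lt_trans hri h
            obtain ⟨_, hlt1⟩ := hFiv i'' r c hB'' hBrc hri'' (by omega)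
            rw [hv'', hFrc1] at hlt1
            omega
        refine absurd ⟨i, c, hBic, hvic, hnocol, hBrJ, hFrJ, hJnot, hri, hcJ,
          fun k h1 h2 => ?_⟩ hJnpf
        obtain ⟨h3, i2, h4, h5, h6⟩ := hP_cond k (hmid k h1 h2)
        exact ⟨⟨i2, h5, h6⟩, ⟨r, hBr k (by omega) h2.le, h3⟩⟩
    -- main case analysis
    intro i i' c hBi hBi' hii hab
    by_cases hc : P c
    · -- column c is in the swapped interval S
      have hcJ : c ≠ J := ne_of_lt hc.1
      have hc1 : 1 ≤ c := hBi.2.2.1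
      obtain ⟨hFrc, ic, hic1, hic2, hic3⟩ := hP_cond c hc
      by_cases hb1 : F i' c = t + 1
      · -- C1 : upper entry was the t+1 at row r, becomes t
        have hi'r : i' = r := uniq_t1 c i' (Or.inl hc) hBi' hb1
        rw [hG_swap_t1 i' c hc hb1] at hab
        have hia : F i c ≠ t + 1 := by
          intro h
          have := uniq_t1 c i (Or.inl hc) hBi h
          omega
        have hib : F i c ≠ t := by
          intro h
          rw [hG_swap_t i c hc h] at hab
          omega
        have e1 : Lop n α r t F i c = F i c :=
          hG_other i c (fun h => hcJ h.2) (fun _ => ⟨hib, hia⟩)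
        rw [e1] at hab ⊢
        obtain ⟨hBx, _⟩ := hFiv i i' c hBi hBi' hii (by omega)
        refine ⟨hBx, ?_⟩
        have e2 : Lop n α r t F i' (c+1) = t := by
          rcases hsucc c hc with h | h
          · exact hG_swap_t1 i' (c+1) h (by rw [hi'r]; exact hrowJ (c+1) (Or.inl h))
          · rw [hi'r, h]; exact hG_rJ
        rw [e2]
        exact hab
      · by_cases hb2 : F i' c = t
        · -- C2 : upper entry was the t below row r, becomes t+1
          have hi'ic : i' = ic := uniq i' ic c hBi' hic2 (by omega)
          have hri' : r < i' := by omega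
          rw [hG_swap_t i' c hc hb2] at hab
          have hia : F i c ≠ t + 1 := by
            intro h
            have := uniq_t1 c i (Or.inl hc) hBi h
            omega
          have hib : F i c ≠ t := by
            intro h
            have := uniq i i' c hBi hBi' (by omega)
            omega
          have e1 : Lop n α r t F i c = F i c :=
            hG_other i c (fun h => hcJ h.2) (fun _ => ⟨hib, hia⟩)
          rw [e1] at hab ⊢
          obtain ⟨hBx, hlt'⟩ := hFiv i i' c hBi hBi' hii (by omega)
          refine ⟨hBx, ?_⟩
          by_cases h2 : P (c+1) ∧ F i' (c+1) = t
          · rw [hG_swap_t i' (c+1) h2.1 h2.2]; omega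
          · have h3 : ¬ (P (c+1) ∧ F i' (c+1) = t + 1) := by
              rintro ⟨hp, hv⟩
              have := uniq_t1 (c+1) i' (Or.inl hp) hBx hv
              omega
            have e3 : Lop n α r t F i' (c+1) = F i' (c+1) :=
              hG_other i' (c+1) (fun h => by omega)
                (fun hp => ⟨fun hv => h2 ⟨hp, hv⟩, fun hv => h3 ⟨hp, hv⟩⟩)
            rw [e3]; omega
        · -- C3 : upper entry unchanged
          have hi'r : i' ≠ r := fun h => hb1 (by rw [h]; exact hFrc)
          have e2 : Lop n α r t F i' c = F i' c :=
            hG_other i' c (fun h => hcJ h.2) (fun _ => ⟨hb2, hb1⟩)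
          rw [e2] at hab
          by_cases ha1 : F i c = t
          · -- C3a : lower entry is the t below row r, becomes t+1
            rw [hG_swap_t i c hc ha1] at hab ⊢
            obtain ⟨hBx, hlt'⟩ := hFiv i i' c hBi hBi' hii (by omega)
            refine ⟨hBx, ?_⟩
            have hne : F i' (c+1) ≠ t + 1 := fun h =>
              hi'r (uniq_t1 (c+1) i' (hsucc c hc) hBx h)
            have e3 : Lop n α r t F i' (c+1) = F i' (c+1) :=
              hG_other i' (c+1) (fun h => hi'r h.1) (fun _ => ⟨by omega, hne⟩)
            rw [e3]; omega
          · by_cases ha2 : F i c = t + 1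
            · -- C3b : lower entry is the t+1 at row r, becomes t
              have hir : i = r := uniq_t1 c i (Or.inl hc) hBi ha2
              rw [hG_swap_t1 i c hc ha2] at hab ⊢
              obtain ⟨hBx, hlt'⟩ := hFiv i i' c hBi hBi' hii (by omega)
              refine ⟨hBx, ?_⟩
              have hi'neR : i' ≠ r := by omega
              have e3 : Lop n α r t F i' (c+1) = F i' (c+1) :=
                hG_other i' (c+1) (fun h => hi'neR h.1)
                  (fun _ => ⟨by omega, by omega⟩)
              rw [e3]; omega
            · -- C3c : both unchanged
              have e1 : Lop n α r t F i c = F i c :=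
                hG_other i c (fun h => hcJ h.2) (fun _ => ⟨ha1, ha2⟩)
              rw [e1] at hab ⊢
              obtain ⟨hBx, hlt'⟩ := hFiv i i' c hBi hBi' hii hab
              refine ⟨hBx, ?_⟩
              by_cases h1 : i' = r ∧ c + 1 = J
              · have e3 : Lop n α r t F i' (c+1) = t := by
                  rw [h1.1, h1.2]; exact hG_rJ
                have hv : F i' (c+1) = t + 1 := by rw [h1.1, h1.2]; exact hFrJ
                rw [e3]; omega
              · by_cases h2 : P (c+1) ∧ F i' (c+1) = t
                · rw [hG_swap_t i' (c+1) h2.1 h2.2]; omega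
                · by_cases h3 : P (c+1) ∧ F i' (c+1) = t + 1
                  · rw [hG_swap_t1 i' (c+1) h3.1 h3.2]; omega
                  · have e3 : Lop n α r t F i' (c+1) = F i' (c+1) :=
                      hG_other i' (c+1) h1
                        (fun hp => ⟨fun hv => h2 ⟨hp, hv⟩, fun hv => h3 ⟨hp, hv⟩⟩)
                    rw [e3]; exact hlt'
    · by_cases hcJ : c = J
      · -- column c is the pivot column J
        have hPc1 : ¬ P (c+1) := fun h => by have := h.1; omega
        by_cases hir' : i' = r
        · -- B1 : upper entry is the new t at (r,J)
          have e2 : Lop n α r t F i' c = t := by rw [hir', hcJ]; exact hG_rJ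
          rw [e2] at hab
          have hiR : i ≠ r := by omega
          have e1 : Lop n α r t F i c = F i c :=
            hG_other i c (fun h => hiR h.1) (fun hp => absurd hp hc)
          rw [e1] at hab ⊢
          have hv' : F i' c = t + 1 := by rw [hir', hcJ]; exact hFrJ
          obtain ⟨hBx, hlt'⟩ := hFiv i i' c hBi hBi' hii (by omega)
          refine ⟨hBx, ?_⟩
          have e3 : Lop n α r t F i' (c+1) = F i' (c+1) :=
            hG_other i' (c+1) (fun h => by omega) (fun hp => absurd hp hPc1)
          rw [e3]; exact hlt'
        · by_cases hir : i = r
          · -- B2 : lower entry is the new t at (r,J)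
            have e1 : Lop n α r t F i c = t := by rw [hir, hcJ]; exact hG_rJ
            rw [e1] at hab ⊢
            have e2 : Lop n α r t F i' c = F i' c :=
              hG_other i' c (fun h => hir' h.1) (fun hp => absurd hp hc)
            rw [e2] at hab
            have hne : F i' c ≠ t + 1 := fun h => hir' (uniq_t1 c i' (Or.inr hcJ) hBi' h)
            have hv : F i c = t + 1 := by rw [hir, hcJ]; exact hFrJ
            obtain ⟨hBx, hlt'⟩ := hFiv i i' c hBi hBi' hii (by omega)
            refine ⟨hBx, ?_⟩
            have e3 : Lop n α r t F i' (c+1) = F i' (c+1) :=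
              hG_other i' (c+1) (fun h => hir' h.1) (fun hp => absurd hp hPc1)
            rw [e3]; omega
          · -- B3 : neither is row r
            have e1 : Lop n α r t F i c = F i c :=
              hG_other i c (fun h => hir h.1) (fun hp => absurd hp hc)
            have e2 : Lop n α r t F i' c = F i' c :=
              hG_other i' c (fun h => hir' h.1) (fun hp => absurd hp hc)
            rw [e1, e2] at hab
            rw [e1]
            obtain ⟨hBx, hlt'⟩ := hFiv i i' c hBi hBi' hii hab
            refine ⟨hBx, ?_⟩
            have e3 : Lop n α r t F i' (c+1) = F i' (c+1) :=
              hG_other i' (c+1) (fun h => hir' h.1) (fun hp => absurd hp hPc1)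
            rw [e3]; exact hlt'
      · -- column c untouched
        have e1 : Lop n α r t F i c = F i c :=
          hG_other i c (fun h => hcJ h.2) (fun hp => absurd hp hc)
        have e2 : Lop n α r t F i' c = F i' c :=
          hG_other i' c (fun h => hcJ h.2) (fun hp => absurd hp hc)
        rw [e1, e2] at hab
        rw [e1]
        obtain ⟨hBx, hlt'⟩ := hFiv i i' c hBi hBi' hii hab
        refine ⟨hBx, ?_⟩
        by_cases h1 : i' = r ∧ c + 1 = J
        · have e3 : Lop n α r t F i' (c+1) = t := by rw [h1.1, h1.2]; exact hG_rJ
          have hv : F i' (c+1) = t + 1 := by rw [h1.1, h1.2]; exact hFrJ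
          have hnt : F i c ≠ t := by
            intro h
            refine hc (key i c (by omega) hBi h (by omega) (fun m hm1 hm2 => ?_))
            omega
          rw [e3]; omega
        · by_cases h2 : P (c+1) ∧ F i' (c+1) = t
          · rw [hG_swap_t i' (c+1) h2.1 h2.2]; omega
          · by_cases h3 : P (c+1) ∧ F i' (c+1) = t + 1
            · rw [hG_swap_t1 i' (c+1) h3.1 h3.2]
              have hi'r : i' = r := uniq_t1 (c+1) i' (Or.inl h3.1) hBx h3.2
              have hnt : F i c ≠ t := by
                intro h
                refine hc (key i c (by omega) hBi h (by omega) (fun m hm1 hm2 => ?_))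
                exact hP_mono (c+1) m h3.1 (by omega) hm2
              omega
            · have e3 : Lop n α r t F i' (c+1) = F i' (c+1) :=
                hG_other i' (c+1) h1
                  (fun hp => ⟨fun hv => h2 ⟨hp, hv⟩, fun hv => h3 ⟨hp, hv⟩⟩)
              rw [e3]; exact hlt'

end Skyline
end
end

section
/- Let F ∈ SSF(α), let t be a positive integer, and let r ≥ t be a row index. Then L_{r,t}(F), the image of F under the lowering operator, is again a semistandard skyline filling for α, i.e. L_{r,t}(F) ∈ SSF(α). -/
open Classical MvPolynomial

noncomputable section

namespace Skyline

/-- The lowering operator maps semistandard skyline fillings for `α` to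
semistandard skyline fillings for `α`. -/
theorem stmt4 (n : ℕ) (α : ℕ → ℕ) (F : ℕ → ℕ → ℕ) (hF : IsSSF n α F)
    (t r : ℕ) (ht : 1 ≤ t) (hrt : t ≤ r) :
    IsSSF n α (Lop n α r t F) := by
  classical
  by_cases h : {j | FreeTp1 n α F t r j}.Nonempty
  case neg =>
    unfold Lop
    rw [if_neg h]
    exact hF
  case pos =>
  obtain ⟨hz, hpos, hdec, hflag, hcol, hB⟩ :
      (∀ i j, ¬ Box n α i j → F i j = 0) ∧
      (∀ i j, Box n α i j → 1 ≤ F i j) ∧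
      (∀ i j, 1 ≤ j → Box n α i (j+1) → F i (j+1) ≤ F i j) ∧
      (∀ i j, Box n α i j → F i j ≤ i) ∧
      (∀ i i' j, Box n α i j → Box n α i' j → i ≠ i' → F i j ≠ F i' j) ∧
      (∀ i i' j, Box n α i j → Box n α i' j → i' < i → F i j < F i' j →
          Box n α i' (j+1) ∧ F i j < F i' (j+1)) := hF
  -- helpers for unfolding definitions
  have hbm : ∀ i c, Box n α i c → 1 ≤ i ∧ i ≤ n ∧ 1 ≤ c ∧ c ≤ α i := fun _ _ hb => hb
  have hbmk : ∀ i c, (1 ≤ i ∧ i ≤ n ∧ 1 ≤ c ∧ c ≤ α i) → Box n α i c := fun _ _ hb => hb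
  have hCCmk : ∀ c v i, Box n α i c → F i c = v → ColContains n α F c v :=
    fun c v i hb hf => show ∃ i, Box n α i c ∧ F i c = v from ⟨i, hb, hf⟩
  have hCCel : ∀ c v, ColContains n α F c v → ∃ i, Box n α i c ∧ F i c = v :=
    fun _ _ hc => hc
  have hbox : ∀ i c, F i c ≠ 0 → Box n α i c := by
    intro i c hfc; by_contra hb; exact hfc (hz i c hb)
  have hboxle : ∀ i c c', Box n α i c → 1 ≤ c' → c' ≤ c → Box n α i c' := by
    intro i c c' hb h1 h2
    obtain ⟨a, b, d, e⟩ := hbm i c hb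
    exact hbmk i c' ⟨a, b, h1, le_trans h2 e⟩
  set j := sSup {j | FreeTp1 n α F t r j} with hjdef
  have hFTel : ∀ c, FreeTp1 n α F t r c →
      Box n α r c ∧ F r c = t + 1 ∧ ¬ColContains n α F c t ∧
      ¬ ∃ i₀ j₀, PseudoFreePair n α F t i₀ j₀ r c := fun _ hc => hc
  have hFTmk : ∀ c, (Box n α r c ∧ F r c = t + 1 ∧ ¬ColContains n α F c t ∧
      ¬ ∃ i₀ j₀, PseudoFreePair n α F t i₀ j₀ r c) → FreeTp1 n α F t r c := fun _ hc => hc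
  have hPPel : ∀ i₀ j₀ i₁ j₁, PseudoFreePair n α F t i₀ j₀ i₁ j₁ →
      Box n α i₀ j₀ ∧ F i₀ j₀ = t ∧ ¬ColContains n α F j₀ (t+1) ∧
      Box n α i₁ j₁ ∧ F i₁ j₁ = t+1 ∧ ¬ColContains n α F j₁ t ∧
      i₁ < i₀ ∧ j₀ < j₁ ∧
      ∀ k, j₀ < k → k < j₁ → ColContains n α F k t ∧ ColContains n α F k (t+1) :=
    fun _ _ _ _ hp => hp
  have hPPmk : ∀ i₀ j₀ i₁ j₁, (Box n α i₀ j₀ ∧ F i₀ j₀ = t ∧ ¬ColContains n α F j₀ (t+1) ∧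
      Box n α i₁ j₁ ∧ F i₁ j₁ = t+1 ∧ ¬ColContains n α F j₁ t ∧
      i₁ < i₀ ∧ j₀ < j₁ ∧
      ∀ k, j₀ < k → k < j₁ → ColContains n α F k t ∧ ColContains n α F k (t+1)) →
      PseudoFreePair n α F t i₀ j₀ i₁ j₁ := fun _ _ _ _ hp => hp
  have hbdd : BddAbove {j | FreeTp1 n α F t r j} :=
    ⟨α r, fun x hx => ((hFTel x hx).1).2.2.2⟩
  have hjmem := Nat.sSup_mem h hbdd
  obtain ⟨hbrj, hFrj, hjnt, hjnp⟩ := hFTel j hjmem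
  have hjmax : ∀ c, FreeTp1 n α F t r c → c ≤ j := fun c hc => le_csSup hbdd hc
  have hjnt' : ∀ i, Box n α i j → F i j ≠ t := fun i hb hf => hjnt (hCCmk j t i hb hf)
  set S : Set ℕ := {k | k < j ∧ ∀ m, k ≤ m → m < j →
      F r m = t + 1 ∧ ∃ i, r < i ∧ Box n α i m ∧ F i m = t} with hSdef
  have hSmem : ∀ c, c ∈ S → c < j ∧ ∀ m, c ≤ m → m < j →
      F r m = t + 1 ∧ ∃ i, r < i ∧ Box n α i m ∧ F i m = t := fun _ hc => hc
  have hSmk : ∀ c, (c < j ∧ ∀ m, c ≤ m → m < j →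
      F r m = t + 1 ∧ ∃ i, r < i ∧ Box n α i m ∧ F i m = t) → c ∈ S := fun _ hc => hc
  have hSlt : ∀ c, c ∈ S → c < j := fun c hc => (hSmem c hc).1
  have hMid : ∀ c, c ∈ S → ∀ m, c ≤ m → m < j →
      F r m = t + 1 ∧ ∃ i, r < i ∧ Box n α i m ∧ F i m = t := fun c hc => (hSmem c hc).2
  have hSt : ∀ c, c ∈ S → F r c = t + 1 ∧ ∃ i, r < i ∧ Box n α i c ∧ F i c = t :=
    fun c hc => hMid c hc c le_rfl (hSlt c hc)
  have hSup : ∀ c c', c ∈ S → c ≤ c' → c' < j → c' ∈ S :=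
    fun c c' hc hcc hcj => hSmk c' ⟨hcj, fun m hm1 hm2 => hMid c hc m (le_trans hcc hm1) hm2⟩
  have hjS : j ∉ S := fun hc => lt_irrefl j (hSlt j hc)
  have hJup : ∀ c, c ∈ S → c + 1 ∈ S ∨ c + 1 = j := by
    intro c hc
    rcases lt_or_eq_of_le (Nat.succ_le_of_lt (hSlt c hc)) with h1 | h1
    · exact Or.inl (hSup c (c+1) hc (by omega) h1)
    · exact Or.inr h1
  have hprev : ∀ c, (c + 1 ∈ S ∨ c + 1 = j) → F r c = t + 1 →
      (∃ i, r < i ∧ Box n α i c ∧ F i c = t) → c ∈ S := by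
    intro c hnext hfc hex
    have hcj : c < j := by
      rcases hnext with h1 | h1
      · have := hSlt _ h1; omega
      · omega
    refine hSmk c ⟨hcj, fun m hm1 hm2 => ?_⟩
    rcases eq_or_lt_of_le hm1 with he | hlt'
    · rw [← he]; exact ⟨hfc, hex⟩
    · rcases hnext with h1 | h1
      · exact hMid _ h1 m (by omega) hm2
      · exact absurd hm2 (by omega)
  have hStrow : ∀ c, c ∈ S → ∀ i, F i c = t → r < i := by
    intro c hc i hfic
    obtain ⟨-, i₀, hri₀, hbi₀, hfi₀⟩ := hSt c hc
    have hbi : Box n α i c := hbox i c (by omega)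
    by_cases hii : i = i₀
    · omega
    · exact absurd (hfic.trans hfi₀.symm) (hcol i i₀ c hbi hbi₀ hii)
  have hJF : ∀ c, c ∈ S ∨ c = j → F r c = t + 1 := by
    rintro c (hc | rfl)
    · exact (hSt c hc).1
    · exact hFrj
  have hSnotp1 : ∀ c, c ∈ S → ∀ i, i ≠ r → F i c ≠ t + 1 := by
    intro c hc i hi hfe
    have h2 := (hSt c hc).1
    exact hcol i r c (hbox i c (by omega)) (hbox r c (by omega)) hi (by rw [hfe, h2])
  -- Lemma A chain: no t+1 in row r strictly right of column j
  have hchain : ∀ d c, α r + 1 - c ≤ d → j < c → F r c = t + 1 →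
      (∀ m, j < m → m < c → F r m = t + 1 ∧ ∃ i, r < i ∧ Box n α i m ∧ F i m = t) →
      False := by
    intro d
    induction d with
    | zero =>
      intro c hle hjc hfc hmid
      have hbrc := hbm r c (hbox r c (by omega))
      omega
    | succ d ih =>
      intro c hle hjc hfc hmid
      have hbrc : Box n α r c := hbox r c (by omega)
      by_cases hct : ColContains n α F c t
      · obtain ⟨i, hbic, hfic⟩ := hCCel c t hct
        have hir : i ≠ r := by intro he; rw [he, hfc] at hfic; omega
        rcases lt_or_gt_of_ne hir with hlt | hgt
        · -- t above row r in column c : contradiction with column c-1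
          have hc2 : 2 ≤ c := by
            have := (hbm r j hbrj).2.2.1; omega
          have h9 : c - 1 + 1 = c := by omega
          have hbic' : Box n α i (c - 1) := hboxle i c (c-1) hbic (by omega) (by omega)
          have hdic : F i c ≤ F i (c - 1) := by
            have := hdec i (c-1) (by omega) (by rw [h9]; exact hbic)
            rwa [h9] at this
          have hfr1 : F r (c - 1) = t + 1 := by
            rcases eq_or_lt_of_le (show j ≤ c - 1 by omega) with he | hlt'
            · rw [← he]; exact hFrj
            · exact (hmid (c-1) hlt' (by omega)).1
          have hbr1 : Box n α r (c - 1) := hbox r (c-1) (by omega)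
          have hne1 : F i (c - 1) ≠ t + 1 := fun hfe =>
            hcol i r (c-1) hbic' hbr1 hir (by rw [hfe, hfr1])
          have hne2 : F i (c - 1) ≠ t := by
            intro hfe
            rcases eq_or_lt_of_le (show j ≤ c - 1 by omega) with he | hlt'
            · rw [← he] at hbic' hfe; exact hjnt' i hbic' hfe
            · obtain ⟨-, i₂, hri₂, hbi₂, hfi₂⟩ := hmid (c-1) hlt' (by omega)
              have : i = i₂ := by
                by_contra hne; exact hcol i i₂ (c-1) hbic' hbi₂ hne (by rw [hfe, hfi₂])
              omega
          have hgt2 : F r (c-1) < F i (c-1) := by omega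
          obtain ⟨-, hlast⟩ := hB r i (c-1) hbr1 hbic' hlt hgt2
          rw [h9] at hlast
          omega
        · -- t below row r in column c : chain continues
          obtain ⟨hbrc1, hlt1⟩ := hB i r c hbic hbrc hgt (by omega)
          have hle1 : F r (c+1) ≤ F r c := hdec r c (by have := (hbm i c hbic).2.2.1; omega) hbrc1
          have hfc1 : F r (c+1) = t + 1 := by omega
          refine ih (c+1) (by omega) (by omega) hfc1 ?_
          intro m hm1 hm2
          rcases eq_or_lt_of_le (show m ≤ c by omega) with he | hlt'
          · rw [he]; exact ⟨hfc, i, hgt, hbic, hfic⟩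
          · exact hmid m hm1 hlt'
      · -- no t in column c : (r,c) is a free t+1, contradicting maximality of j
        have hfree : FreeTp1 n α F t r c := by
          refine hFTmk c ⟨hbrc, hfc, hct, ?_⟩
          rintro ⟨i₀, j₀, hp⟩
          obtain ⟨hbij, hfij, hnc1, -, -, -, hri₀, hj₀c, hbet⟩ := hPPel i₀ j₀ r c hp
          rcases lt_trichotomy j₀ j with h1 | h1 | h1
          · exact hjnt (hbet j h1 (by omega)).1
          · rw [h1] at hbij hfij; exact hjnt' i₀ hbij hfij
          · have hmm := (hmid j₀ h1 hj₀c).1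
            exact hnc1 (hCCmk j₀ (t+1) r (hbox r j₀ (by omega)) hmm)
        have := hjmax c hfree
        omega
  have hA : Box n α r (j + 1) → F r (j + 1) ≤ t := by
    intro hbj1
    by_contra hgt
    have hle : F r (j+1) ≤ F r j := hdec r j (by have := (hbm r j hbrj).2.2.1; omega) hbj1
    have hfj1 : F r (j+1) = t + 1 := by omega
    exact hchain (α r + 1) (j+1) (by omega) (by omega) hfj1
      (fun m hm1 hm2 => absurd hm2 (by omega))
  -- Lemma B
  have hLB : ∀ i c, r < i → F i c = t → (c + 1 ∈ S ∨ c + 1 = j) →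
      F r c ≠ t + 1 → False := by
    intro i c hri hfic hnext hne
    have hbic : Box n α i c := hbox i c (by omega)
    have hfrc1 : F r (c + 1) = t + 1 := hJF (c+1) hnext
    have hbrc1 : Box n α r (c + 1) := hbox r (c+1) (by omega)
    have h1c : 1 ≤ c := (hbm i c hbic).2.2.1
    have hbrc : Box n α r c := hboxle r (c+1) c hbrc1 h1c (by omega)
    have hge : F r (c + 1) ≤ F r c := hdec r c h1c hbrc1
    have hcj : c < j := by
      rcases hnext with h1 | h1
      · have := hSlt _ h1; omega
      · omega
    by_cases hc1 : ColContains n α F c (t + 1)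
    · obtain ⟨i', hbi', hfi'⟩ := hCCel c (t+1) hc1
      have hir' : i' ≠ r := by intro he; rw [he] at hfi'; exact hne hfi'
      have hii' : i' ≠ i := by intro he; rw [he, hfic] at hfi'; omega
      rcases lt_or_gt_of_ne hii' with hlt | hgt'
      · -- i' < i : t+1 above the t
        obtain ⟨hbx, hlt2⟩ := hB i i' c hbic hbi' hlt (by omega)
        have h10 : F i' (c+1) ≤ F i' c := hdec i' c h1c hbx
        have h11 : F i' (c+1) = t + 1 := by omega
        exact hcol i' r (c+1) hbx hbrc1 hir' (by rw [h11, hfrc1])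
      · -- i < i' (t+1 below the t): r < i', compare with row r
        have hri' : r < i' := lt_trans hri hgt'
        obtain ⟨-, hlt2⟩ := hB i' r c hbi' hbrc hri' (by omega)
        omega
    · -- no t+1 in column c : pseudo-free pair with (r,j), contradiction
      have hbet : ∀ k, c < k → k < j → ColContains n α F k t ∧ ColContains n α F k (t+1) := by
        intro k hk1 hk2
        have hkS : k ∈ S := by
          rcases hnext with h1 | h1
          · exact hSup (c+1) k h1 (by omega) hk2
          · exact absurd hk2 (by omega)
        obtain ⟨hfk, i₂, hri₂, hbik, hfik⟩ := hSt k hkS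
        exact ⟨hCCmk k t i₂ hbik hfik, hCCmk k (t+1) r (hbox r k (by omega)) hfk⟩
      exact hjnp ⟨i, c, hPPmk i c r j ⟨hbic, hfic, hc1, hbrj, hFrj, hjnt, hri, hcj, hbet⟩⟩
  set G : ℕ → ℕ → ℕ := fun i c =>
    if i = r ∧ c = j then t
    else if c ∈ S ∧ F i c = t then t + 1
    else if c ∈ S ∧ F i c = t + 1 then t
    else F i c with hGdef
  have hGrj : G r j = t := by
    simp [hGdef]
  have hGrS : ∀ c, c ∈ S → G r c = t := by
    intro c hc
    simp only [hGdef]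
    split_ifs with h1 h2 h3
    · rfl
    · have := (hSt c hc).1; have := h2.2; omega
    · rfl
    · exact absurd ⟨hc, (hSt c hc).1⟩ h3
  have hGrJ : ∀ c, c ∈ S ∨ c = j → G r c = t := by
    rintro c (hc | rfl)
    · exact hGrS c hc
    · exact hGrj
  have hGunch : ∀ i c, c ∉ S → c ≠ j → G i c = F i c := by
    intro i c h1 h2
    simp only [hGdef]
    rw [if_neg (fun hx => h2 hx.2), if_neg (fun hx => h1 hx.1), if_neg (fun hx => h1 hx.1)]
  have hGj : ∀ i, i ≠ r → G i j = F i j := by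
    intro i hi
    simp only [hGdef]
    rw [if_neg (fun hx => hi hx.1), if_neg (fun hx => hjS hx.1), if_neg (fun hx => hjS hx.1)]
  have hGrowVal : ∀ i c, i ≠ r →
      (G i c = F i c ∧ ¬(c ∈ S ∧ F i c = t)) ∨
      (c ∈ S ∧ F i c = t ∧ G i c = t + 1 ∧ r < i) := by
    intro i c hi
    by_cases hx : c ∈ S ∧ F i c = t
    · right
      refine ⟨hx.1, hx.2, ?_, hStrow c hx.1 i hx.2⟩
      simp only [hGdef]
      rw [if_neg (fun hy => hi hy.1), if_pos hx]
    · left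
      refine ⟨?_, hx⟩
      have hx2 : ¬(c ∈ S ∧ F i c = t + 1) := fun hy => hSnotp1 c hy.1 i hi hy.2
      simp only [hGdef]
      rw [if_neg (fun hy => hi hy.1), if_neg hx, if_neg hx2]
  -- the six conditions
  have p1 : ∀ i c, ¬Box n α i c → G i c = 0 := by
    intro i c hb
    have h0 := hz i c hb
    simp only [hGdef]
    split_ifs with h1 h2 h3
    · exact absurd (show Box n α i c by rw [h1.1, h1.2]; exact hbrj) hb
    · have := h2.2; omega
    · have := h3.2; omega
    · exact h0
  have p2 : ∀ i c, Box n α i c → 1 ≤ G i c := by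
    intro i c hb
    simp only [hGdef]
    split_ifs
    · omega
    · omega
    · omega
    · exact hpos i c hb
  have p4 : ∀ i c, Box n α i c → G i c ≤ i := by
    intro i c hb
    simp only [hGdef]
    split_ifs with h1 h2 h3
    · have := h1.1; omega
    · have := hStrow c h2.1 i h2.2; omega
    · have := hflag i c hb; have := h3.2; omega
    · exact hflag i c hb
  have p5 : ∀ i i' c, Box n α i c → Box n α i' c → i ≠ i' → G i c ≠ G i' c := by
    intro i i' c hb hb' hne
    by_cases hcS : c ∈ S
    · by_cases hi : i = r
      · have hi' : i' ≠ r := fun he => hne (hi.trans he.symm)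
        rw [hi, hGrS c hcS]
        rcases hGrowVal i' c hi' with ⟨hu, hnot⟩ | ⟨-, -, hg', -⟩
        · rw [hu]; exact fun he => hnot ⟨hcS, he.symm⟩
        · rw [hg']; omega
      · by_cases hi'r : i' = r
        · rw [hi'r, hGrS c hcS]
          rcases hGrowVal i c hi with ⟨hu, hnot⟩ | ⟨-, -, hg', -⟩
          · rw [hu]; exact fun he => hnot ⟨hcS, he⟩
          · rw [hg']; omega
        · rcases hGrowVal i c hi with ⟨hu, hnot⟩ | ⟨-, hf, hg', -⟩
          · rcases hGrowVal i' c hi'r with ⟨hu', hnot'⟩ | ⟨-, hf', hg'', -⟩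
            · rw [hu, hu']; exact hcol i i' c hb hb' hne
            · rw [hu, hg'']; exact fun he => hSnotp1 c hcS i hi he
          · rcases hGrowVal i' c hi'r with ⟨hu', hnot'⟩ | ⟨-, hf', hg'', -⟩
            · rw [hg', hu']; exact fun he => hSnotp1 c hcS i' hi'r he.symm
            · exact absurd (hf.trans hf'.symm) (hcol i i' c hb hb' hne)
    · by_cases hcj : c = j
      · rw [hcj] at hb hb' ⊢
        by_cases hi : i = r
        · have hi' : i' ≠ r := fun he => hne (hi.trans he.symm)
          rw [hi, hGrj, hGj i' hi']
          exact fun he => hjnt' i' hb' he.symm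
        · by_cases hi'r : i' = r
          · rw [hi'r, hGrj, hGj i hi]
            exact hjnt' i hb
          · rw [hGj i hi, hGj i' hi'r]; exact hcol i i' j hb hb' hne
      · rw [hGunch i c hcS hcj, hGunch i' c hcS hcj]; exact hcol i i' c hb hb' hne
  have p3 : ∀ i c, 1 ≤ c → Box n α i (c + 1) → G i (c + 1) ≤ G i c := by
    intro i c hc1 hb1
    by_cases hi : i = r
    · rw [hi] at hb1 ⊢
      by_cases h2 : c + 1 ∈ S ∨ c + 1 = j
      · have hg1 : G r (c+1) = t := hGrJ (c+1) h2
        by_cases h3 : c ∈ S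
        · rw [hg1, hGrS c h3]
        · have hcj : c ≠ j := by
            rintro rfl
            rcases h2 with h4 | h4
            · have := hSlt _ h4; omega
            · omega
          have hgc : G r c = F r c := hGunch r c h3 hcj
          have hf1 : F r (c+1) = t + 1 := hJF _ h2
          have := hdec r c hc1 hb1
          rw [hg1, hgc]; omega
      · have hg1 : G r (c+1) = F r (c+1) :=
          hGunch r (c+1) (fun hx => h2 (Or.inl hx)) (fun hx => h2 (Or.inr hx))
        by_cases h3 : c ∈ S
        · exact absurd (hJup c h3) h2
        · by_cases hcj : c = j
          · rw [hcj] at hb1 hg1 ⊢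
            rw [hg1, hGrj]
            exact hA hb1
          · rw [hg1, hGunch r c h3 hcj]
            exact hdec r c hc1 hb1
    · rcases hGrowVal i (c+1) hi with ⟨hg1, -⟩ | ⟨hs1, hf1, hg1, hri⟩
      · rcases hGrowVal i c hi with ⟨hgc, -⟩ | ⟨hsc, hfc, hgc, -⟩
        · rw [hg1, hgc]; exact hdec i c hc1 hb1
        · rw [hg1, hgc]
          have := hdec i c hc1 hb1
          omega
      · rcases hGrowVal i c hi with ⟨hgc, hno⟩ | ⟨hsc, hfc, hgc, -⟩
        · rw [hg1, hgc]
          have hle : F i (c+1) ≤ F i c := hdec i c hc1 hb1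
          have hfc_ne : F i c ≠ t := by
            intro hfe
            have hnext : c + 1 ∈ S ∨ c + 1 = j := Or.inl hs1
            have hfr : F r c ≠ t + 1 := fun hfr =>
              hno ⟨hprev c hnext hfr ⟨i, hri, hbox i c (by omega), hfe⟩, hfe⟩
            exact hLB i c hri hfe hnext hfr
          omega
        · rw [hg1, hgc]
  have p6 : ∀ i i' c, Box n α i c → Box n α i' c → i' < i → G i c < G i' c →
      Box n α i' (c + 1) ∧ G i c < G i' (c + 1) := by
    intro i i' c hb hb' hlt hval
    by_cases hcS : c ∈ S
    · by_cases hi : i = r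
      · -- lower row is r
        rw [hi] at hb hlt hval ⊢
        have hi'r : i' ≠ r := by omega
        have hgc : G r c = t := hGrS c hcS
        have hgc' : G i' c = F i' c := by
          rcases hGrowVal i' c hi'r with ⟨h1, -⟩ | ⟨-, -, -, hri'⟩
          · exact h1
          · omega
        rw [hgc, hgc'] at hval
        have hf2 : F i' c ≠ t + 1 := hSnotp1 c hcS i' hi'r
        have hfrc : F r c = t + 1 := (hSt c hcS).1
        obtain ⟨hbx, hlt2⟩ := hB r i' c hb hb' hlt (by omega)
        refine ⟨hbx, ?_⟩
        have hg1 : G i' (c+1) = F i' (c+1) := by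
          rcases hGrowVal i' (c+1) hi'r with ⟨h1, -⟩ | ⟨-, -, -, hri'⟩
          · exact h1
          · omega
        rw [hgc, hg1]; omega
      · by_cases hi' : i' = r
        · -- upper row is r
          rw [hi'] at hb' hlt hval ⊢
          have hgc' : G r c = t := hGrS c hcS
          have hgc : G i c = F i c := by
            rcases hGrowVal i c hi with ⟨h1, -⟩ | ⟨-, -, hgx, -⟩
            · exact h1
            · rw [hgx, hgc'] at hval; omega
          rw [hgc, hgc'] at hval
          have hfrc : F r c = t + 1 := (hSt c hcS).1
          obtain ⟨hbx, hlt2⟩ := hB i r c hb hb' hlt (by omega)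
          refine ⟨hbx, ?_⟩
          have hgr1 : G r (c+1) = t := hGrJ (c+1) (hJup c hcS)
          rw [hgc, hgr1]; omega
        · -- neither row is r
          rcases hGrowVal i c hi with ⟨hgc, hno⟩ | ⟨-, hfc, hgc, -⟩
          · rcases hGrowVal i' c hi' with ⟨hgc', hno'⟩ | ⟨-, hfc', hgc', hri'⟩
            · rw [hgc, hgc'] at hval
              obtain ⟨hbx, hlt2⟩ := hB i i' c hb hb' hlt hval
              refine ⟨hbx, ?_⟩
              rcases hGrowVal i' (c+1) hi' with ⟨h1, -⟩ | ⟨-, hf1, hg1, -⟩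
              · rw [hgc, h1]; exact hlt2
              · rw [hgc, hg1]; omega
            · -- upper entry changes from t to t+1
              rw [hgc, hgc'] at hval
              have hfne : F i c ≠ t := fun he => hno ⟨hcS, he⟩
              have hval' : F i c < F i' c := by omega
              obtain ⟨hbx, hlt2⟩ := hB i i' c hb hb' hlt hval'
              refine ⟨hbx, ?_⟩
              rcases hGrowVal i' (c+1) hi' with ⟨h1, -⟩ | ⟨-, hf1, hg1, -⟩
              · rw [hgc, h1]; exact hlt2
              · rw [hgc, hg1]; omega
          · -- lower entry changes from t to t+1
            rcases hGrowVal i' c hi' with ⟨hgc', hno'⟩ | ⟨-, hfc', hgc', hri'⟩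
            · rw [hgc, hgc'] at hval
              have hval' : F i c < F i' c := by omega
              obtain ⟨hbx, hlt2⟩ := hB i i' c hb hb' hlt hval'
              refine ⟨hbx, ?_⟩
              have hfr1 : F r (c+1) = t + 1 := hJF (c+1) (hJup c hcS)
              have hne1 : F i' (c+1) ≠ t + 1 := fun he =>
                hcol i' r (c+1) hbx (hbox r (c+1) (by omega)) hi' (by rw [he, hfr1])
              rcases hGrowVal i' (c+1) hi' with ⟨h1, -⟩ | ⟨-, hf1, hg1, -⟩
              · rw [hgc, h1]; omega
              · omega
            · exact absurd (hfc.trans hfc'.symm) (hcol i i' c hb hb' (by omega))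
    · by_cases hcj : c = j
      · rw [hcj] at hb hb' hval ⊢
        by_cases hi : i = r
        · -- lower row is r, column j
          rw [hi] at hb hlt hval ⊢
          have hi'r : i' ≠ r := by omega
          have hgc' : G i' j = F i' j := hGj i' hi'r
          rw [hGrj, hgc'] at hval
          have hne1 : F i' j ≠ t + 1 := fun he =>
            hcol i' r j hb' hbrj hi'r (by rw [he, hFrj])
          obtain ⟨hbx, hlt2⟩ := hB r i' j hb hb' hlt (by omega)
          refine ⟨hbx, ?_⟩
          have hg1 : G i' (j+1) = F i' (j+1) :=
            hGunch i' (j+1) (fun hx => by have := hSlt _ hx; omega) (by omega)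
          rw [hGrj, hg1]; omega
        · by_cases hi' : i' = r
          · -- upper row is r, column j
            rw [hi'] at hb' hlt hval ⊢
            rw [hGj i hi, hGrj] at hval
            obtain ⟨hbx, hlt2⟩ := hB i r j hb hb' hlt (by omega)
            refine ⟨hbx, ?_⟩
            have hg1 : G r (j+1) = F r (j+1) :=
              hGunch r (j+1) (fun hx => by have := hSlt _ hx; omega) (by omega)
            rw [hGj i hi, hg1]
            exact hlt2
          · rw [hGj i hi, hGj i' hi'] at hval
            obtain ⟨hbx, hlt2⟩ := hB i i' j hb hb' hlt hval
            refine ⟨hbx, ?_⟩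
            have hg1 : G i' (j+1) = F i' (j+1) :=
              hGunch i' (j+1) (fun hx => by have := hSlt _ hx; omega) (by omega)
            rw [hGj i hi, hg1]
            exact hlt2
      · -- column c untouched
        have hgc : G i c = F i c := hGunch i c hcS hcj
        have hgc' : G i' c = F i' c := hGunch i' c hcS hcj
        rw [hgc, hgc'] at hval
        obtain ⟨hbx, hlt2⟩ := hB i i' c hb hb' hlt hval
        refine ⟨hbx, ?_⟩
        rw [hgc]
        by_cases hi' : i' = r
        · rw [hi'] at hbx hlt2 hlt ⊢
          by_cases h2 : c + 1 ∈ S ∨ c + 1 = j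
          · have hg1 : G r (c+1) = t := hGrJ (c+1) h2
            have hf1 : F r (c+1) = t + 1 := hJF (c+1) h2
            have hfne : F i c ≠ t := by
              intro hfe
              have hfr : F r c ≠ t + 1 := fun hfr =>
                hcS (hprev c h2 hfr ⟨i, hlt, hb, hfe⟩)
              exact hLB i c hlt hfe h2 hfr
            rw [hg1]; omega
          · rw [hGunch r (c+1) (fun hx => h2 (Or.inl hx)) (fun hx => h2 (Or.inr hx))]
            exact hlt2
        · rcases hGrowVal i' (c+1) hi' with ⟨h1, -⟩ | ⟨-, hf1, hg1, -⟩
          · rw [h1]; exact hlt2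
          · rw [hg1]; omega
  have hmain : IsSSF n α G := ⟨p1, p2, p3, p4, p5, p6⟩
  unfold Lop
  rw [if_pos h]
  exact hmain

end Skyline
end
end

section
/- Let F ∈ SSF(α), let t be a positive integer, and let r ≥ t+1 be a row index. Then R_{r,t}(F), the image of F under the raising operator, is again a semistandard skyline filling for α, i.e. R_{r,t}(F) ∈ SSF(α). -/
open Classical MvPolynomial

noncomputable section

namespace Skyline

-- AUX START
/-- Chain lemma: starting from a `t+1` at `(a, k)` with `a < r`, strictly right of the
free `t` at `(r,j)`, such that all intermediate columns contain both `t` and `t+1`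
and every `t` in columns `[j, k)` sits in a row `≥ r`, we derive a contradiction. -/
lemma chainAux (n : ℕ) (α : ℕ → ℕ) (F : ℕ → ℕ → ℕ) (hF : IsSSF n α F)
    (t r j a : ℕ) (hfree : FreeT n α F t r j) (har : a < r) :
    ∀ d k, α a + 1 - k ≤ d → j < k → Box n α a k → F a k = t + 1 →
      (∀ m, j < m → m < k → Box n α a m ∧ F a m = t + 1) →
      (∀ m, j < m → m < k → ColContains n α F m t) →
      (∀ m b, j ≤ m → m < k → Box n α b m → F b m = t → r ≤ b) →
      False := by
  obtain ⟨h0, h1, h2, h3, h4, h5⟩ := hF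
  obtain ⟨hbrj, hFrj, hnoc, hnpf⟩ := hfree
  intro d
  induction d with
  | zero =>
    intro k hk _ hbox _ _ _ _
    have := hbox.2.2.2; omega
  | succ d ih =>
    intro k hk hjk hbox hfak hhist hct hlow
    by_cases hcc : ColContains n α F k t
    · obtain ⟨b, hbb, hfb⟩ := hcc
      have hba : b ≠ a := by intro h; rw [h, hfak] at hfb; omega
      by_cases hbr : r ≤ b
      · -- continue the chain
        have hab : a < b := lt_of_lt_of_le har hbr
        obtain ⟨hbox1, hlt1⟩ := h5 b a k hbb hbox hab (by rw [hfb, hfak]; omega)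
        have hk1 : 1 ≤ k := by have := hbrj.2.2.1; omega
        have hle : F a (k+1) ≤ F a k := h2 a k hk1 hbox1
        rw [hfb] at hlt1
        rw [hfak] at hle
        have hfk1 : F a (k+1) = t + 1 := by omega
        refine ih (k+1) (by have := hbox1.2.2.2; omega) (by omega) hbox1 hfk1
          (fun m hm1 hm2 => ?_) (fun m hm1 hm2 => ?_)
          (fun m b' hm1 hm2 hb' hf' => ?_)
        · rcases Nat.lt_succ_iff_lt_or_eq.mp hm2 with h | h
          · exact hhist m hm1 h
          · subst h; exact ⟨hbox, hfak⟩
        · rcases Nat.lt_succ_iff_lt_or_eq.mp hm2 with h | h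
          · exact hct m hm1 h
          · subst h; exact ⟨b, hbb, hfb⟩
        · rcases Nat.lt_succ_iff_lt_or_eq.mp hm2 with h | h
          · exact hlow m b' hm1 h hb' hf'
          · subst h
            have hb'b : b' = b := by
              by_contra hne
              exact h4 b' b m hb' hbb hne (by rw [hf', hfb])
            omega
      · -- the t in column k lies strictly above row r : contradiction
        push_neg at hbr
        have hj1 : 1 ≤ j := hbrj.2.2.1
        obtain ⟨k0, rfl⟩ : ∃ k0, k = k0 + 1 := ⟨k - 1, by omega⟩
        have hjk0 : j ≤ k0 := by omega
        have hbk0 : Box n α b k0 := ⟨hbb.1, hbb.2.1, by omega, by have := hbb.2.2.2; omega⟩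
        have hmono : F b (k0+1) ≤ F b k0 := h2 b k0 (by omega) hbb
        obtain ⟨c, hbc, hfc, hrc⟩ : ∃ c, Box n α c k0 ∧ F c k0 = t ∧ r ≤ c := by
          rcases eq_or_lt_of_le hjk0 with h | h
          · exact ⟨r, by rw [← h]; exact hbrj, by rw [← h]; exact hFrj, le_rfl⟩
          · obtain ⟨c, hc1, hc2⟩ := hct k0 h (by omega)
            exact ⟨c, hc1, hc2, hlow k0 c (by omega) (by omega) hc1 hc2⟩
        have hbc' : b < c := lt_of_lt_of_le hbr hrc
        have hne_t : F b k0 ≠ t := by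
          intro h
          have := hlow k0 b hjk0 (by omega) hbk0 h
          omega
        have hne_t1 : F b k0 ≠ t + 1 := by
          intro h
          rcases eq_or_lt_of_le hjk0 with hh | hh
          · exact hnoc ⟨b, by rw [hh]; exact hbk0, by rw [hh]; exact h⟩
          · obtain ⟨hba2, hfa2⟩ := hhist k0 hh (by omega)
            exact h4 b a k0 hbk0 hba2 hba (by rw [h, hfa2])
        have hgt : t < F b k0 := by rw [hfb] at hmono; omega
        obtain ⟨_, hlast⟩ := h5 c b k0 hbc hbk0 hbc' (by rw [hfc]; exact hgt)
        rw [hfc, hfb] at hlast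
        omega
    · -- column k has no t : pseudo-free pair, contradicting freeness
      exact hnpf ⟨a, k, hbrj, hFrj, hnoc, hbox, hfak, hcc, har, hjk,
        fun m hm1 hm2 => ⟨hct m hm1 hm2, ⟨a, (hhist m hm1 hm2).1, (hhist m hm1 hm2).2⟩⟩⟩

/-- Main lemma: the result of the raising operation is a semistandard skyline filling. -/
lemma isSSF_of_raise (n : ℕ) (α : ℕ → ℕ) (F : ℕ → ℕ → ℕ) (t r j : ℕ) (S : Set ℕ)
    (G : ℕ → ℕ → ℕ) (hF : IsSSF n α F) (ht : 1 ≤ t) (hrt : t + 1 ≤ r)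
    (hj : FreeT n α F t r j) (hmin : ∀ c, FreeT n α F t r c → j ≤ c)
    (hS1 : ∀ c ∈ S, c < j)
    (hS2 : ∀ c ∈ S, ∀ m, c ≤ m → m < j →
      F r m = t ∧ ∃ i, r < i ∧ Box n α i m ∧ F i m = t + 1)
    (hS3 : ∀ c, c < j → (∀ m, c ≤ m → m < j →
      F r m = t ∧ ∃ i, r < i ∧ Box n α i m ∧ F i m = t + 1) → c ∈ S)
    (hG : ∀ i c, G i c = if i = r ∧ c = j then t + 1
      else if c ∈ S ∧ F i c = t then t + 1
      else if c ∈ S ∧ F i c = t + 1 then t else F i c) :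
    IsSSF n α G := by
  have h0 := hF.1
  have h1 := hF.2.1
  have h2 := hF.2.2.1
  have h3 := hF.2.2.2.1
  have h4 := hF.2.2.2.2.1
  have h5 := hF.2.2.2.2.2
  have hbrj := hj.1
  have hFrj := hj.2.1
  have hnoc := hj.2.2.1
  have huniq : ∀ b b' c, Box n α b c → Box n α b' c → F b c = F b' c → b = b' := by
    intro b b' c hb hb' he
    by_contra hne
    exact h4 b b' c hb hb' hne he
  have hSrow : ∀ c ∈ S, F r c = t := fun c hc => (hS2 c hc c le_rfl (hS1 c hc)).1
  have hStp1 : ∀ c ∈ S, ∃ i, r < i ∧ Box n α i c ∧ F i c = t + 1 :=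
    fun c hc => (hS2 c hc c le_rfl (hS1 c hc)).2
  have hSpos : ∀ c ∈ S, 1 ≤ c := by
    intro c hc
    by_contra h
    have hc0 : c = 0 := by omega
    have hrow := hSrow c hc
    rw [hc0] at hrow
    rw [h0 r 0 (fun hb => by have := hb.2.2.1; omega)] at hrow
    omega
  have hSboxr : ∀ c ∈ S, Box n α r c :=
    fun c hc => ⟨hbrj.1, hbrj.2.1, hSpos c hc, le_trans (le_of_lt (hS1 c hc)) hbrj.2.2.2⟩
  have hboxr_le : ∀ c, 1 ≤ c → c ≤ j → Box n α r c :=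
    fun c hc1 hc2 => ⟨hbrj.1, hbrj.2.1, hc1, le_trans hc2 hbrj.2.2.2⟩
  have h_t_in_S : ∀ c ∈ S, ∀ b, Box n α b c → F b c = t → b = r :=
    fun c hc b hb hf => huniq b r c hb (hSboxr c hc) (by rw [hf, hSrow c hc])
  have h_tp1_in_S : ∀ c ∈ S, ∀ b, Box n α b c → F b c = t + 1 → r < b := by
    intro c hc b hb hf
    obtain ⟨i0, hi0, hbi0, hfi0⟩ := hStp1 c hc
    have : b = i0 := huniq b i0 c hb hbi0 (by rw [hf, hfi0])
    omega
  have h_t_in_j : ∀ b, Box n α b j → F b j = t → b = r :=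
    fun b hb hf => huniq b r j hb hbrj (by rw [hf, hFrj])
  have h_no_tp1_j : ∀ b, Box n α b j → F b j ≠ t + 1 :=
    fun b hb hf => hnoc ⟨b, hb, hf⟩
  have hjS : j ∉ S := fun h => lt_irrefl j (hS1 j h)
  have hg1 : G r j = t + 1 := by rw [hG]; simp
  have hg2 : ∀ i c, c ∈ S → F i c = t → G i c = t + 1 := by
    intro i c hc hf
    rw [hG, if_neg (show ¬(i = r ∧ c = j) from fun h => hjS (h.2 ▸ hc)), if_pos ⟨hc, hf⟩]
  have hg3 : ∀ i c, c ∈ S → F i c = t + 1 → G i c = t := by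
    intro i c hc hf
    rw [hG, if_neg (show ¬(i = r ∧ c = j) from fun h => hjS (h.2 ▸ hc)),
      if_neg (show ¬(c ∈ S ∧ F i c = t) from fun h => by have := h.2; rw [hf] at this; omega),
      if_pos ⟨hc, hf⟩]
  have hg4 : ∀ i c, c ∉ S → ¬(i = r ∧ c = j) → G i c = F i c := by
    intro i c hcS hij
    rw [hG, if_neg hij, if_neg (fun h => hcS h.1), if_neg (fun h => hcS h.1)]
  have hg5 : ∀ i c, F i c ≠ t → F i c ≠ t + 1 → ¬(i = r ∧ c = j) → G i c = F i c := by
    intro i c hf1 hf2 hij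
    rw [hG, if_neg hij, if_neg (fun h => hf1 h.2), if_neg (fun h => hf2 h.2)]
  have hg6 : ∀ i, i ≠ r → G i j = F i j :=
    fun i hi => hg4 i j hjS (fun h => hi h.1)
  have hgcases : ∀ i c, (G i c = F i c ∧ (c ∈ S → F i c ≠ t ∧ F i c ≠ t + 1)) ∨
      (((i = r ∧ c = j) ∨ c ∈ S) ∧ G i c = t + 1 ∧ F i c = t) ∨
      (c ∈ S ∧ G i c = t ∧ F i c = t + 1) := by
    intro i c
    rw [hG i c]
    split_ifs with hx hy hz
    · exact Or.inr (Or.inl ⟨Or.inl hx, rfl, by rw [hx.1, hx.2]; exact hFrj⟩)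
    · exact Or.inr (Or.inl ⟨Or.inr hy.1, rfl, hy.2⟩)
    · exact Or.inr (Or.inr ⟨hz.1, rfl, hz.2⟩)
    · exact Or.inl ⟨rfl, fun hs => ⟨fun hf => hy ⟨hs, hf⟩, fun hf => hz ⟨hs, hf⟩⟩⟩
  have hboxleft : ∀ i c, 1 ≤ c → Box n α i (c+1) → Box n α i c :=
    fun i c hc1 hb => ⟨hb.1, hb.2.1, hc1, le_trans (Nat.le_succ c) hb.2.2.2⟩
  have hSnext : ∀ c ∈ S, c + 1 < j → c + 1 ∈ S :=
    fun c hc h => hS3 (c+1) h (fun m hm1 hm2 => hS2 c hc m (by omega) hm2)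
  -- Key sub-lemma ruling out a `t` in row `r` just left of the swap interval.
  have keyA : ∀ c, c ∉ S → F r c = t → 1 ≤ c → (c + 1 ∈ S ∨ c + 1 = j) → False := by
    intro c hcS hfrc hc1 hcase
    have hclt : c < j := by
      rcases hcase with h | h
      · have := hS1 _ h; omega
      · omega
    have hboxrc : Box n α r c := hboxr_le c hc1 (by omega)
    have htail : ∀ m, c + 1 ≤ m → m < j →
        F r m = t ∧ ∃ i, r < i ∧ Box n α i m ∧ F i m = t + 1 := by
      intro m hm1 hm2
      rcases hcase with h | h
      · exact hS2 _ h m hm1 hm2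
      · exact absurd hm2 (by omega)
    have hnob : ¬∃ i0, r < i0 ∧ Box n α i0 c ∧ F i0 c = t + 1 := by
      rintro ⟨i0, hi0, hb0, hf0⟩
      refine hcS (hS3 c hclt (fun m hm1 hm2 => ?_))
      rcases eq_or_lt_of_le hm1 with rfl | h
      · exact ⟨hfrc, i0, hi0, hb0, hf0⟩
      · exact htail m h hm2
    by_cases hcol : ColContains n α F c (t+1)
    · obtain ⟨b, hbb, hfb⟩ := hcol
      have hbr : b < r := by
        rcases lt_trichotomy b r with h | h | h
        · exact h
        · rw [h, hfrc] at hfb; omega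
        · exact absurd ⟨b, h, hbb, hfb⟩ hnob
      obtain ⟨hbox1, hlt1⟩ := h5 r b c hboxrc hbb hbr (by rw [hfrc, hfb]; omega)
      have hle1 : F b (c+1) ≤ t + 1 := by
        have hh := h2 b c hc1 hbox1
        rw [hfb] at hh; exact hh
      have heq1 : F b (c+1) = t + 1 := by rw [hfrc] at hlt1; omega
      rcases hcase with h | h
      · have := h_tp1_in_S _ h b hbox1 heq1; omega
      · exact h_no_tp1_j b (h ▸ hbox1) (h ▸ heq1)
    · have hfree' : FreeT n α F t r c := by
        refine ⟨hboxrc, hfrc, hcol, ?_⟩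
        rintro ⟨i', j'', hpf⟩
        obtain ⟨_, _, _, hbX, hfX, hncX, hiX, hjX, hbtwX⟩ := hpf
        have hj''j : j'' < j := by
          rcases lt_trichotomy j'' j with h | h | h
          · exact h
          · exact absurd ⟨i', h ▸ hbX, h ▸ hfX⟩ hnoc
          · exact absurd ((hbtwX j hclt h).2) hnoc
        rcases hcase with h | h
        · have hmem : F r j'' = t := (hS2 _ h j'' hjX hj''j).1
          exact hncX ⟨r, hboxr_le j'' (by omega) (by omega), hmem⟩
        · omega
      have := hmin c hfree'
      omega
  refine ⟨?_, ?_, ?_, ?_, ?_, ?_⟩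
  · -- zero outside boxes
    intro i c hnb
    have hz := h0 i c hnb
    rcases hgcases i c with ⟨h, _⟩ | ⟨_, _, h⟩ | ⟨_, _, h⟩
    · rw [h, hz]
    · rw [hz] at h; omega
    · rw [hz] at h; omega
  · -- positivity
    intro i c hb
    rcases hgcases i c with ⟨h, _⟩ | ⟨_, h, _⟩ | ⟨_, h, _⟩
    · rw [h]; exact h1 i c hb
    · omega
    · omega
  · -- rows weakly decreasing
    intro i c hc1 hbc1
    have hbc : Box n α i c := hboxleft i c hc1 hbc1
    have hF2 : F i (c+1) ≤ F i c := h2 i c hc1 hbc1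
    by_cases hir : i = r
    · rw [hir] at hbc hbc1 hF2 ⊢
      by_cases hcS : c ∈ S
      · have hgc : G r c = t + 1 := hg2 r c hcS (hSrow c hcS)
        rcases lt_trichotomy (c+1) j with h | h | h
        · rw [hgc, hg2 r (c+1) (hSnext c hcS h) (hSrow _ (hSnext c hcS h))]
        · rw [hgc, h, hg1]
        · have := hS1 c hcS; omega
      · by_cases hcj : c = j
        · subst hcj
          have hgc1 : G r (c+1) = F r (c+1) :=
            hg4 r (c+1) (fun h => by have := hS1 _ h; omega) (fun h => absurd h.2 (by omega))
          rw [hg1, hgc1]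
          rw [hFrj] at hF2
          omega
        · have hgc : G r c = F r c := hg4 r c hcS (fun h => hcj h.2)
          by_cases hc1S : c + 1 ∈ S
          · have hgc1 : G r (c+1) = t + 1 := hg2 r (c+1) hc1S (hSrow _ hc1S)
            have hrc1 : F r (c+1) = t := hSrow _ hc1S
            have hne : F r c ≠ t := fun h => keyA c hcS h hc1 (Or.inl hc1S)
            rw [hgc, hgc1]
            rw [hrc1] at hF2
            omega
          · by_cases hc1j : c + 1 = j
            · have hgc1 : G r (c+1) = t + 1 := by rw [hc1j, hg1]
              have hne : F r c ≠ t := fun h => keyA c hcS h hc1 (Or.inr hc1j)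
              have hge : t ≤ F r c := by
                rw [← hFrj, ← hc1j]
                exact hF2
              rw [hgc, hgc1]
              omega
            · rw [hgc, hg4 r (c+1) hc1S (fun h => hc1j h.2)]
              exact hF2
    · -- row other than r
      have hcase1 : G i (c+1) = F i (c+1) ∨
          (G i (c+1) = t ∧ F i (c+1) = t + 1 ∧ c + 1 ∈ S) := by
        rcases hgcases i (c+1) with ⟨h, _⟩ | ⟨hor, hga, hfa⟩ | ⟨hs, hga, hfa⟩
        · exact Or.inl h
        · rcases hor with h | h
          · exact absurd h.1 hir
          · exact absurd (h_t_in_S _ h i hbc1 hfa) hir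
        · exact Or.inr ⟨hga, hfa, hs⟩
      have hcase0 : G i c = F i c ∨ (G i c = t ∧ F i c = t + 1 ∧ c ∈ S) := by
        rcases hgcases i c with ⟨h, _⟩ | ⟨hor, hga, hfa⟩ | ⟨hs, hga, hfa⟩
        · exact Or.inl h
        · rcases hor with h | h
          · exact absurd h.1 hir
          · exact absurd (h_t_in_S _ h i hbc hfa) hir
        · exact Or.inr ⟨hga, hfa, hs⟩
      rcases hcase0 with h0' | ⟨h0a, h0b, h0S⟩
      · rcases hcase1 with h1' | ⟨h1a, h1b, h1S⟩
        · rw [h0', h1']; exact hF2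
        · rw [h0', h1a]
          rw [h1b] at hF2
          omega
      · rcases hcase1 with h1' | ⟨h1a, h1b, h1S⟩
        · rw [h0a, h1']
          have hne : F i (c+1) ≠ t + 1 := by
            intro hf
            have hcj' : c + 1 ≤ j := by have := hS1 _ h0S; omega
            rcases eq_or_lt_of_le hcj' with h | h
            · exact h_no_tp1_j i (h ▸ hbc1) (h ▸ hf)
            · have hgg := hg3 i (c+1) (hSnext c h0S h) hf
              rw [h1', hf] at hgg
              omega
          omega
        · rw [h0a, h1a]
  · -- flag condition
    intro i c hb
    rcases hgcases i c with ⟨h, _⟩ | ⟨hor, hg, hf⟩ | ⟨hs, hg, hf⟩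
    · rw [h]; exact h3 i c hb
    · rcases hor with h' | h'
      · rw [hg, h'.1]; exact hrt
      · have := h_t_in_S _ h' i hb hf
        rw [hg, this]; exact hrt
    · have := h3 i c hb
      rw [hg]; omega
  · -- distinct columns
    intro i i' c hbi hbi' hne
    by_cases hcS : c ∈ S
    · have key : ∀ b, Box n α b c →
          (G b c = t + 1 ∧ F b c = t) ∨ (G b c = t ∧ F b c = t + 1) ∨
          (G b c = F b c ∧ F b c ≠ t ∧ F b c ≠ t + 1) := by
        intro b hb
        rcases hgcases b c with ⟨h, hinfo⟩ | ⟨hor, hg, hf⟩ | ⟨_, hg, hf⟩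
        · exact Or.inr (Or.inr ⟨h, (hinfo hcS).1, (hinfo hcS).2⟩)
        · exact Or.inl ⟨hg, hf⟩
        · exact Or.inr (Or.inl ⟨hg, hf⟩)
      rcases key i hbi with ⟨ha1, ha2⟩ | ⟨ha1, ha2⟩ | ⟨ha1, ha2, ha3⟩ <;>
        rcases key i' hbi' with ⟨hb1, hb2⟩ | ⟨hb1, hb2⟩ | ⟨hb1, hb2, hb3⟩
      · exact absurd (ha2.trans hb2.symm) (h4 i i' c hbi hbi' hne)
      · rw [ha1, hb1]; omega
      · rw [ha1, hb1]; exact fun h => hb3 h.symm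
      · rw [ha1, hb1]; omega
      · exact absurd (ha2.trans hb2.symm) (h4 i i' c hbi hbi' hne)
      · rw [ha1, hb1]; exact fun h => hb2 h.symm
      · rw [ha1, hb1]; exact ha3
      · rw [ha1, hb1]; exact ha2
      · rw [ha1, hb1]; exact h4 i i' c hbi hbi' hne
    · by_cases hcj : c = j
      · subst hcj
        by_cases hirr : i = r
        · have hi'r : i' ≠ r := fun h => hne (hirr.trans h.symm)
          rw [hirr, hg1, hg6 i' hi'r]
          exact fun h => h_no_tp1_j i' hbi' h.symm
        · by_cases hi'r : i' = r
          · rw [hi'r, hg1, hg6 i hirr]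
            exact fun h => h_no_tp1_j i hbi h
          · rw [hg6 i hirr, hg6 i' hi'r]
            exact h4 i i' c hbi hbi' hne
      · rw [hg4 i c hcS (fun h => hcj h.2), hg4 i' c hcS (fun h => hcj h.2)]
        exact h4 i i' c hbi hbi' hne
  · -- condition (iv)
    intro i i' c hbi hbi' hii' hGlt
    by_cases hcS : c ∈ S
    · obtain ⟨i0, hi0r, hbi0, hfi0⟩ := hStp1 c hcS
      have hfrc : F r c = t := hSrow c hcS
      have hbrc : Box n α r c := hSboxr c hcS
      have hcltj : c < j := hS1 c hcS
      have hboxrc1 : Box n α r (c+1) := hboxr_le (c+1) (by omega) (by omega)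
      have hc1Sj : c + 1 ∈ S ∨ c + 1 = j := by
        rcases eq_or_lt_of_le (show c + 1 ≤ j by omega) with h | h
        · exact Or.inr h
        · exact Or.inl (hSnext c hcS h)
      have hgrc1 : G r (c+1) = t + 1 := by
        rcases hc1Sj with h | h
        · exact hg2 r (c+1) h (hSrow _ h)
        · rw [h, hg1]
      have hGright : ∀ b, b ≠ r → Box n α b (c+1) → F b (c+1) ≠ t + 1 →
          G b (c+1) = F b (c+1) := by
        intro b hbr hb hft1
        have hft : F b (c+1) ≠ t := by
          intro h
          rcases hc1Sj with hs | hs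
          · exact hbr (h_t_in_S _ hs b hb h)
          · exact hbr (h_t_in_j b (hs ▸ hb) (hs ▸ h))
        exact hg5 b (c+1) hft hft1 (fun h => hbr h.1)
      have hGtp1r : ∀ b, Box n α b (c+1) → F b (c+1) = t + 1 → G b (c+1) = t ∧ r < b := by
        intro b hb hf
        rcases hc1Sj with hs | hs
        · exact ⟨hg3 b (c+1) hs hf, h_tp1_in_S _ hs b hb hf⟩
        · exact absurd (hs ▸ hf) (h_no_tp1_j b (hs ▸ hb))
      by_cases hieq : i = r
      · rw [hieq] at hGlt hbi hii' ⊢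
        have hi'r : i' ≠ r := by omega
        have hGi'c : G i' c = F i' c :=
          hg5 i' c (fun h => hi'r (h_t_in_S c hcS i' hbi' h))
            (fun h => absurd (h_tp1_in_S c hcS i' hbi' h) (by omega)) (fun h => hi'r h.1)
        have hgrc : G r c = t + 1 := hg2 r c hcS hfrc
        rw [hgrc, hGi'c] at hGlt
        obtain ⟨hbx, hlx⟩ := h5 r i' c hbrc hbi' hii' (by rw [hfrc]; omega)
        refine ⟨hbx, ?_⟩
        have hne1 : F i' (c+1) ≠ t + 1 := fun h => absurd (hGtp1r i' hbx h).2 (by omega)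
        rw [hgrc, hGright i' hi'r hbx hne1]
        rw [hfrc] at hlx
        omega
      · by_cases hi'eq : i' = r
        · rw [hi'eq] at hGlt hbi' hii' ⊢
          refine ⟨hboxrc1, ?_⟩
          rw [hgrc1]
          by_cases hii0 : i = i0
          · rw [hii0, hg3 i0 c hcS hfi0]
            omega
          · have hgt : G i c = F i c :=
              hg5 i c (fun h => hieq (h_t_in_S c hcS i hbi h))
                (fun h => hii0 (huniq i i0 c hbi hbi0 (by rw [h, hfi0]))) (fun h => hieq h.1)
            rw [hgt]
            rw [hgt, hg2 r c hcS hfrc] at hGlt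
            exact hGlt
        · by_cases hii0 : i = i0
          · rw [hii0] at hGlt hbi hii' ⊢
            have hgic' : G i' c = F i' c :=
              hg5 i' c (fun h => hi'eq (h_t_in_S c hcS i' hbi' h))
                (fun h => absurd (huniq i' i0 c hbi' hbi0 (by rw [h, hfi0])) (by omega))
                (fun h => hi'eq h.1)
            rw [hg3 i0 c hcS hfi0, hgic'] at hGlt
            have hne2 : F i' c ≠ t + 1 :=
              fun h => absurd (huniq i' i0 c hbi' hbi0 (by rw [h, hfi0])) (by omega)
            obtain ⟨hbx, hlx⟩ := h5 i0 i' c hbi0 hbi' hii' (by rw [hfi0]; omega)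
            refine ⟨hbx, ?_⟩
            rw [hg3 i0 c hcS hfi0]
            rw [hfi0] at hlx
            rw [hGright i' hi'eq hbx (by omega)]
            omega
          · have hgic : G i c = F i c :=
              hg5 i c (fun h => hieq (h_t_in_S c hcS i hbi h))
                (fun h => hii0 (huniq i i0 c hbi hbi0 (by rw [h, hfi0]))) (fun h => hieq h.1)
            by_cases hi'i0 : i' = i0
            · subst hi'i0
              rw [hgic, hg3 i' c hcS hfi0] at hGlt
              obtain ⟨hbx, hlx⟩ := h5 i i' c hbi hbi0 hii' (by rw [hfi0]; omega)
              refine ⟨hbx, ?_⟩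
              rw [hgic]
              by_cases hf1 : F i' (c+1) = t + 1
              · rw [(hGtp1r i' hbx hf1).1]
                omega
              · rw [hGright i' (by omega) hbx hf1]
                omega
            · have hgi'c : G i' c = F i' c :=
                hg5 i' c (fun h => hi'eq (h_t_in_S c hcS i' hbi' h))
                  (fun h => hi'i0 (huniq i' i0 c hbi' hbi0 (by rw [h, hfi0])))
                  (fun h => hi'eq h.1)
              rw [hgic, hgi'c] at hGlt
              obtain ⟨hbx, hlx⟩ := h5 i i' c hbi hbi' hii' hGlt
              refine ⟨hbx, ?_⟩
              rw [hgic]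
              by_cases hf1 : F i' (c+1) = t + 1
              · rw [(hGtp1r i' hbx hf1).1]
                have hnet : F i c ≠ t := fun h => hieq (h_t_in_S c hcS i hbi h)
                rw [hf1] at hlx
                omega
              · rw [hGright i' hi'eq hbx hf1]
                exact hlx
    · by_cases hcj : c = j
      · subst hcj
        by_cases hieq : i = r
        · rw [hieq] at hGlt hbi hii' ⊢
          have hi'r : i' ≠ r := by omega
          rw [hg1, hg6 i' hi'r] at hGlt
          obtain ⟨hbx, hlx⟩ := h5 r i' c hbrj hbi' hii' (by rw [hFrj]; omega)
          refine ⟨hbx, ?_⟩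
          rw [hg1, hg4 i' (c+1) (fun h => by have := hS1 _ h; omega)
            (fun h => absurd h.2 (by omega))]
          rw [hFrj] at hlx
          have hne1 : F i' (c+1) ≠ t + 1 := by
            intro hf
            exact chainAux n α F hF t r c i' hj hii' (α i' + 1 - (c+1)) (c+1) le_rfl
              (by omega) hbx hf (fun m hm1 hm2 => absurd hm2 (by omega))
              (fun m hm1 hm2 => absurd hm2 (by omega))
              (fun m b hm1 hm2 hb hfb => by
                have hmj : m = c := by omega
                rw [hmj] at hb hfb
                have := h_t_in_j b hb hfb
                omega)
          omega
        · by_cases hi'eq : i' = r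
          · rw [hi'eq] at hGlt hbi' hii' ⊢
            rw [hg6 i hieq, hg1] at hGlt
            have hnet : F i c ≠ t := fun h => hieq (h_t_in_j i hbi h)
            obtain ⟨hbx, hlx⟩ := h5 i r c hbi hbrj hii' (by rw [hFrj]; omega)
            refine ⟨hbx, ?_⟩
            rw [hg6 i hieq, hg4 r (c+1) (fun h => by have := hS1 _ h; omega)
              (fun h => absurd h.2 (by omega))]
            exact hlx
          · rw [hg6 i hieq, hg6 i' hi'eq] at hGlt
            obtain ⟨hbx, hlx⟩ := h5 i i' c hbi hbi' hii' hGlt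
            refine ⟨hbx, ?_⟩
            rw [hg6 i hieq, hg4 i' (c+1) (fun h => by have := hS1 _ h; omega)
              (fun h => hi'eq h.1)]
            exact hlx
      · -- column c untouched
        have hgic : G i c = F i c := hg4 i c hcS (fun h => hcj h.2)
        have hgi'c : G i' c = F i' c := hg4 i' c hcS (fun h => hcj h.2)
        rw [hgic, hgi'c] at hGlt
        obtain ⟨hbx, hlx⟩ := h5 i i' c hbi hbi' hii' hGlt
        refine ⟨hbx, ?_⟩
        rw [hgic]
        by_cases hc1S : c + 1 ∈ S
        · by_cases hf1 : F i' (c+1) = t + 1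
          · rw [hg3 i' (c+1) hc1S hf1]
            have hi'r : r < i' := h_tp1_in_S _ hc1S i' hbx hf1
            have hfle : F i c ≤ t := by rw [hf1] at hlx; omega
            rcases eq_or_lt_of_le hfle with heq | hlt
            · exfalso
              have hrc1 : F r (c+1) = t := hSrow _ hc1S
              have hbrc1 : Box n α r (c+1) := hSboxr _ hc1S
              have hc1' : 1 ≤ c := hbi.2.2.1
              have hbrc : Box n α r c :=
                ⟨hbrj.1, hbrj.2.1, hc1', by have := hbrc1.2.2.2; omega⟩
              have hfrcge : t ≤ F r c := by
                rw [← hrc1]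
                exact h2 r c hc1' hbrc1
              have hir : i ≠ r := by omega
              have hfrc_ne : F r c ≠ t := fun hh => hir (huniq i r c hbi hbrc (by rw [heq, hh]))
              obtain ⟨_, hlx2⟩ := h5 i r c hbi hbrc (by omega) (by omega)
              rw [heq] at hlx2
              rw [hrc1] at hlx2
              omega
            · exact hlt
          · by_cases hf0 : F i' (c+1) = t
            · rw [hg2 i' (c+1) hc1S hf0]
              rw [hf0] at hlx
              omega
            · rw [hg5 i' (c+1) hf0 hf1
                (fun h => absurd h.2 (by have := hS1 _ hc1S; omega))]
              exact hlx
        · by_cases hc1j : c + 1 = j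
          · by_cases hi'r : i' = r
            · rw [hi'r] at hlx ⊢
              rw [hc1j, hg1]
              rw [hc1j, hFrj] at hlx
              omega
            · rw [hg4 i' (c+1) hc1S (fun h => hi'r h.1)]
              exact hlx
          · rw [hg4 i' (c+1) hc1S (fun h => hc1j h.2)]
            exact hlx
-- AUX END


/-- The raising operator maps semistandard skyline fillings for `α` to
semistandard skyline fillings for `α`. -/
theorem stmt5 (n : ℕ) (α : ℕ → ℕ) (F : ℕ → ℕ → ℕ) (hF : IsSSF n α F)
    (t r : ℕ) (ht : 1 ≤ t) (hrt : t + 1 ≤ r) :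
    IsSSF n α (Rop n α r t F) := by
  by_cases hne : {j | FreeT n α F t r j}.Nonempty
  · unfold Rop
    rw [if_pos hne]
    exact isSSF_of_raise n α F t r (sInf {j | FreeT n α F t r j})
      {k | k < sInf {j | FreeT n α F t r j} ∧ ∀ m, k ≤ m →
        m < sInf {j | FreeT n α F t r j} →
        F r m = t ∧ ∃ i, r < i ∧ Box n α i m ∧ F i m = t + 1}
      _ hF ht hrt (Nat.sInf_mem hne) (fun c hc => Nat.sInf_le hc)
      (fun c hc => hc.1) (fun c hc => hc.2) (fun c h1 h2 => ⟨h1, h2⟩)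
      (fun i c => by congr)
  · unfold Rop
    rw [if_neg hne]
    exact hF

end Skyline
end
end

section
/- Let F ∈ SSF(α), let t be a positive integer, and let r ≥ t+1 be a row index. If row r of F contains a free entry t+1, then R_{r,t}(L_{r,t}(F)) = F. -/
open Classical MvPolynomial

noncomputable section

namespace Skyline

/-- Entries weakly decrease along rows, multi-step version. -/
lemma row_mono (n : ℕ) (α : ℕ → ℕ) (F : ℕ → ℕ → ℕ) (hF : IsSSF n α F)
    (i : ℕ) {j j' : ℕ} (h1 : 1 ≤ j) (hjj : j ≤ j') (hb : Box n α i j') :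
    F i j' ≤ F i j := by
  induction j', hjj using Nat.le_induction with
  | base => exact le_rfl
  | succ m hm ih =>
      have hbm : Box n α i m :=
        ⟨hb.1, hb.2.1, le_trans h1 hm, le_trans (Nat.le_succ m) hb.2.2.2⟩
      exact le_trans (hF.2.2.1 i m (le_trans h1 hm) hb) (ih hbm)

/-- Boxes are left-justified. -/
lemma box_left_s6 (n : ℕ) (α : ℕ → ℕ) {i j j' : ℕ} (h1 : 1 ≤ j) (hjj : j ≤ j')
    (hb : Box n α i j') : Box n α i j :=
  ⟨hb.1, hb.2.1, h1, le_trans hjj hb.2.2.2⟩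

/-- Key structural lemma: there cannot be an entry `t+1` at `(p,j)`, an entry
`t+1` at `(q, j+d+1)` with `q < p`, such that every column strictly between
contains an entry `t+1`. -/
lemma no_config (n : ℕ) (α : ℕ → ℕ) (F : ℕ → ℕ → ℕ) (hF : IsSSF n α F) (t : ℕ) :
    ∀ d j p q, Box n α p j → F p j = t + 1 → Box n α q (j + d + 1) →
      F q (j + d + 1) = t + 1 → q < p →
      (∀ k, j < k → k < j + d + 1 → ∃ i, Box n α i k ∧ F i k = t + 1) → False := by
  intro d
  induction d with
  | zero =>
      intro j p q hbp hfp hbq hfq hqp _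
      simp only [Nat.add_zero] at hbq hfq
      have hbqj : Box n α q j := box_left_s6 n α hbp.2.2.1 (Nat.le_succ j) hbq
      have h1 : F q (j + 1) ≤ F q j := hF.2.2.1 q j hbp.2.2.1 hbq
      have hne : F p j ≠ F q j :=
        hF.2.2.2.2.1 p q j hbp hbqj (Nat.ne_of_gt hqp)
      have hlt : F p j < F q j := by omega
      have := (hF.2.2.2.2.2 p q j hbp hbqj hqp hlt).2
      omega
  | succ d ih =>
      intro j p q hbp hfp hbq hfq hqp hmid
      obtain ⟨a, hba, hfa⟩ := hmid (j + 1) (Nat.lt_succ_self j) (by omega)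
      have hbaj : Box n α a j := box_left_s6 n α hbp.2.2.1 (Nat.le_succ j) hba
      have h1 : F a (j + 1) ≤ F a j := hF.2.2.1 a j hbp.2.2.1 hba
      by_cases hap : a < p
      · have hne : F p j ≠ F a j :=
          hF.2.2.2.2.1 p a j hbp hbaj (by omega)
        have hlt : F p j < F a j := by omega
        have := (hF.2.2.2.2.2 p a j hbp hbaj hap hlt).2
        omega
      · have hq : q < a := by omega
        have e : j + (d + 1) + 1 = (j + 1) + d + 1 := by omega
        rw [e] at hbq hfq
        exact ih (j + 1) a q hba hfa hbq hfq hq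
          (fun k hk1 hk2 => hmid k (by omega) (by omega))

/-- If row `r` of `F` contains a free entry `t+1`, then
`R_{r,t}(L_{r,t}(F)) = F`. -/
theorem stmt6 (n : ℕ) (α : ℕ → ℕ) (F : ℕ → ℕ → ℕ) (hF : IsSSF n α F)
    (t r : ℕ) (ht : 1 ≤ t) (hrt : t + 1 ≤ r)
    (hfree : ∃ j, FreeTp1 n α F t r j) :
    Rop n α r t (Lop n α r t F) = F := by
  have hne : {j | FreeTp1 n α F t r j}.Nonempty := hfree
  set j := sSup {j | FreeTp1 n α F t r j} with hjdef
  have hjA : FreeTp1 n α F t r j :=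
    Nat.sSup_mem hne ⟨α r, fun x hx => hx.1.2.2.2⟩
  obtain ⟨hbox, hFrj, hnoT, -⟩ := hjA
  set S : Set ℕ := {k | k < j ∧ ∀ m, k ≤ m → m < j →
      F r m = t + 1 ∧ ∃ i, r < i ∧ Box n α i m ∧ F i m = t} with hSdef
  set G := Lop n α r t F with hGdef
  have hGval : ∀ i c, G i c =
      if i = r ∧ c = j then t
      else if c ∈ S ∧ F i c = t then t + 1
      else if c ∈ S ∧ F i c = t + 1 then t
      else F i c := by
    intro i c
    rw [hGdef]
    simp only [Lop]
    rw [if_pos hne]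
  have hrow0 : F r 0 = 0 := hF.1 r 0 (fun hb => absurd hb.2.2.1 (by omega))
  have hrowge : ∀ c, 1 ≤ c → c ≤ j → t + 1 ≤ F r c := by
    intro c h1 h2
    have := row_mono n α F hF r h1 h2 hbox
    omega
  have hSmem : ∀ k ∈ S, k < j ∧ F r k = t + 1 ∧
      ∃ i, r < i ∧ Box n α i k ∧ F i k = t := by
    intro k hk
    rw [hSdef] at hk
    exact ⟨hk.1, (hk.2 k le_rfl hk.1).1, (hk.2 k le_rfl hk.1).2⟩
  have hSint : ∀ k ∈ S, ∀ m, k ≤ m → m < j → m ∈ S := by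
    intro k hk m hkm hmj
    rw [hSdef] at hk ⊢
    exact ⟨hmj, fun m' h1 h2 => hk.2 m' (le_trans hkm h1) h2⟩
  have hGup : ∀ i c, j < c → G i c = F i c := by
    intro i c hc
    have h1 : ¬(i = r ∧ c = j) := fun h => by omega
    have h2 : c ∉ S := fun h => by have := (hSmem c h).1; omega
    rw [hGval, if_neg h1, if_neg (fun h => h2 h.1), if_neg (fun h => h2 h.1)]
  have huniq : ∀ i, Box n α i j → F i j = t + 1 → i = r := by
    intro i hbi hfi
    by_contra hir
    exact hF.2.2.2.2.1 i r j hbi hbox hir (by rw [hfi, hFrj])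
  have hGrj : G r j = t := by rw [hGval]; simp
  have hFreeTj : FreeT n α G t r j := by
    refine ⟨hbox, hGrj, ?_, ?_⟩
    · rintro ⟨i, hbi, hgi⟩
      by_cases hir : i = r
      · subst hir; rw [hGrj] at hgi; omega
      · have hSj : j ∉ S := fun h => by have := (hSmem j h).1; omega
        rw [hGval, if_neg (fun h => hir h.1), if_neg (fun h => hSj h.1),
          if_neg (fun h => hSj h.1)] at hgi
        exact hir (huniq i hbi hgi)
    · rintro ⟨i', j', hpf⟩
      obtain ⟨-, -, -, hbij', hgij', -, hir, hjj', hmid⟩ := hpf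
      obtain ⟨d, rfl⟩ : ∃ d, j' = j + d + 1 := ⟨j' - j - 1, by omega⟩
      refine no_config n α F hF t d j r i' hbox hFrj hbij' ?_ hir ?_
      · rw [← hGup i' (j + d + 1) (by omega)]; exact hgij'
      · intro k hk1 hk2
        obtain ⟨i, hbi, hgi⟩ := (hmid k hk1 hk2).2
        exact ⟨i, hbi, by rw [← hGup i k hk1]; exact hgi⟩
  have hBne : {c | FreeT n α G t r c}.Nonempty := ⟨j, hFreeTj⟩
  have hGrc : ∀ c, c < j → G r c = t → c ∈ S := by
    intro c hcj hgc
    by_contra hcS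
    have h1 : ¬(r = r ∧ c = j) := fun h => by omega
    rw [hGval, if_neg h1, if_neg (fun h => hcS h.1), if_neg (fun h => hcS h.1)] at hgc
    rcases Nat.eq_zero_or_pos c with hc0 | hc1
    · subst hc0; rw [hrow0] at hgc; omega
    · have := hrowge c hc1 (le_of_lt hcj); omega
  have hnotlow : ∀ c, FreeT n α G t r c → j ≤ c := by
    intro c hc
    by_contra hlt
    push_neg at hlt
    have hcS : c ∈ S := hGrc c hlt hc.2.1
    obtain ⟨-, -, i, hri, hbi, hfi⟩ := hSmem c hcS
    refine hc.2.2.1 ⟨i, hbi, ?_⟩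
    have h1 : ¬(i = r ∧ c = j) := fun h => by have := h.1; omega
    rw [hGval, if_neg h1, if_pos ⟨hcS, hfi⟩]
  have hsInf : sInf {c | FreeT n α G t r c} = j :=
    le_antisymm (Nat.sInf_le hFreeTj) (hnotlow _ (Nat.sInf_mem hBne))
  have hSR : {k | k < j ∧ ∀ m, k ≤ m → m < j →
      G r m = t ∧ ∃ i, r < i ∧ Box n α i m ∧ G i m = t + 1} = S := by
    ext k
    constructor
    · rintro ⟨hkj, hk⟩
      rw [hSdef]
      refine ⟨hkj, fun m h1 h2 => ?_⟩
      have hmS : m ∈ S := hGrc m h2 (hk m h1 h2).1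
      exact ⟨(hSmem m hmS).2.1, (hSmem m hmS).2.2⟩
    · intro hk
      have hkj := (hSmem k hk).1
      refine ⟨hkj, fun m h1 h2 => ?_⟩
      have hmS : m ∈ S := hSint k hk m h1 h2
      obtain ⟨hmj, hfm, i, hri, hbi, hfi⟩ := hSmem m hmS
      constructor
      · have h1' : ¬(r = r ∧ m = j) := fun h => by have := h.2; omega
        rw [hGval, if_neg h1', if_neg (fun h => by have := h.2; omega : ¬(m ∈ S ∧ F r m = t)),
          if_pos ⟨hmS, hfm⟩]
      · refine ⟨i, hri, hbi, ?_⟩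
        rw [hGval, if_neg (fun h => by have := h.1; omega : ¬(i = r ∧ m = j)),
          if_pos ⟨hmS, hfi⟩]
  have hRval : ∀ i c, Rop n α r t G i c =
      (if i = r ∧ c = j then t + 1
      else if c ∈ S ∧ G i c = t then t + 1
      else if c ∈ S ∧ G i c = t + 1 then t
      else G i c) := by
    intro i c
    simp only [Rop]
    rw [if_pos hBne]
    simp only [hsInf, hSR]
  funext i c
  rw [hRval i c]
  by_cases h1 : i = r ∧ c = j
  · obtain ⟨rfl, rfl⟩ := h1
    rw [if_pos ⟨rfl, rfl⟩, hFrj]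
  · rw [if_neg h1]
    by_cases h2 : c ∈ S
    · by_cases hft : F i c = t
      · have hg : G i c = t + 1 := by rw [hGval, if_neg h1, if_pos ⟨h2, hft⟩]
        rw [if_neg (fun h => by have := h.2; omega : ¬(c ∈ S ∧ G i c = t)),
          if_pos ⟨h2, hg⟩, hft]
      · by_cases hft1 : F i c = t + 1
        · have hg : G i c = t := by
            rw [hGval, if_neg h1, if_neg (fun h => by have := h.2; omega : ¬(c ∈ S ∧ F i c = t)),
              if_pos ⟨h2, hft1⟩]
          rw [if_pos ⟨h2, hg⟩, hft1]
        · have hg : G i c = F i c := by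
            rw [hGval, if_neg h1,
              if_neg (fun h => by have := h.2; omega : ¬(c ∈ S ∧ F i c = t)),
              if_neg (fun h => by have := h.2; omega : ¬(c ∈ S ∧ F i c = t + 1))]
          rw [if_neg (fun h => hft (hg ▸ h.2)), if_neg (fun h => hft1 (hg ▸ h.2)), hg]
    · have hg : G i c = F i c := by
        rw [hGval, if_neg h1, if_neg (fun h => h2 h.1), if_neg (fun h => h2 h.1)]
      rw [if_neg (fun h => h2 h.1), if_neg (fun h => h2 h.1), hg]

end Skyline
end
end

section
/- Let F ∈ SSF(α), let t be a positive integer, and let r ≥ t+1 be a row index. If row r of F contains a free entry t, then L_{r,t}(R_{r,t}(F)) = F. -/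
open Classical MvPolynomial

noncomputable section

namespace Skyline

/-- If row `r` of `F` contains a free entry `t`, then
`L_{r,t}(R_{r,t}(F)) = F`. -/
theorem stmt7 (n : ℕ) (α : ℕ → ℕ) (F : ℕ → ℕ → ℕ) (hF : IsSSF n α F)
    (t r : ℕ) (ht : 1 ≤ t) (hrt : t + 1 ≤ r)
    (hfree : ∃ j, FreeT n α F t r j) :
    Lop n α r t (Rop n α r t F) = F := by
  obtain ⟨hzero, hpos, hdec, hflag, hdist, hinv⟩ := hF
  have hA : {j | FreeT n α F t r j}.Nonempty := hfree
  set j : ℕ := sInf {j | FreeT n α F t r j} with hjdef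
  have hjA : FreeT n α F t r j := Nat.sInf_mem hA
  obtain ⟨hbox, hFrj, hnocol, -⟩ := hjA
  obtain ⟨h1r, hrn, h1j, hjar⟩ := hbox
  have hbox : Box n α r j := ⟨h1r, hrn, h1j, hjar⟩
  -- basic helpers
  have box_of_val : ∀ i c, 1 ≤ F i c → Box n α i c := by
    intro i c h
    by_contra hb
    rw [hzero i c hb] at h
    omega
  have row_mono : ∀ i q, 1 ≤ q → ∀ c, q ≤ c → Box n α i c → F i c ≤ F i q := by
    intro i q h1 c
    induction c with
    | zero => intro h hb; omega
    | succ c ih =>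
      intro hqc hb
      rcases Nat.eq_or_lt_of_le hqc with h | h
      · rw [h]
      · have hq : q ≤ c := by omega
        have hbc : Box n α i c := ⟨hb.1, hb.2.1, by omega, by have := hb.2.2.2; omega⟩
        exact le_trans (hdec i c (by omega) hb) (ih hq hbc)
  set S : Set ℕ := {k | k < j ∧ ∀ m, k ≤ m → m < j →
      F r m = t ∧ ∃ i, r < i ∧ Box n α i m ∧ F i m = t + 1} with hSdef
  have hSmem : ∀ k, k ∈ S ↔ (k < j ∧ ∀ m, k ≤ m → m < j →
      F r m = t ∧ ∃ i, r < i ∧ Box n α i m ∧ F i m = t + 1) := by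
    intro k; rw [hSdef]; rfl
  have hS_lt : ∀ k, k ∈ S → k < j := fun k hk => ((hSmem k).mp hk).1
  have hS_self : ∀ k, k ∈ S → F r k = t ∧ ∃ i, r < i ∧ Box n α i k ∧ F i k = t + 1 :=
    fun k hk => ((hSmem k).mp hk).2 k le_rfl ((hSmem k).mp hk).1
  have hS_up : ∀ k, k ∈ S → ∀ m, k ≤ m → m < j → m ∈ S := by
    intro k hk m hkm hmj
    exact (hSmem m).mpr ⟨hmj, fun m' h1 h2 => ((hSmem k).mp hk).2 m' (le_trans hkm h1) h2⟩
  set F' : ℕ → ℕ → ℕ := Rop n α r t F with hF'def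
  have hRop : F' = fun i c =>
      if i = r ∧ c = j then t + 1
      else if c ∈ S ∧ F i c = t then t + 1
      else if c ∈ S ∧ F i c = t + 1 then t
      else F i c := by
    rw [hF'def]
    unfold Rop
    rw [if_pos hA]
  have hv : ∀ i c, F' i c =
      (if i = r ∧ c = j then t + 1
      else if c ∈ S ∧ F i c = t then t + 1
      else if c ∈ S ∧ F i c = t + 1 then t
      else F i c) := fun i c => by rw [hRop]
  -- value lemmas
  have hvout : ∀ i c, c ∉ S → ¬(i = r ∧ c = j) → F' i c = F i c := by
    intro i c hcS hij
    rw [hv, if_neg hij, if_neg (fun h => hcS h.1), if_neg (fun h => hcS h.1)]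
  have hvS_t : ∀ i c, c ∈ S → F i c = t → F' i c = t + 1 := by
    intro i c hc hval
    rw [hv, if_neg (by rintro ⟨-, h⟩; have := hS_lt c hc; omega), if_pos ⟨hc, hval⟩]
  have hvS_t1 : ∀ i c, c ∈ S → F i c = t + 1 → F' i c = t := by
    intro i c hc hval
    rw [hv, if_neg (by rintro ⟨-, h⟩; have := hS_lt c hc; omega),
      if_neg (by rintro ⟨-, h⟩; omega), if_pos ⟨hc, hval⟩]
  have hvS_keep : ∀ i c, c ∈ S → F i c ≠ t → F i c ≠ t + 1 → F' i c = F i c := by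
    intro i c hc h1 h2
    rw [hv, if_neg (by rintro ⟨-, h⟩; have := hS_lt c hc; omega),
      if_neg (by rintro ⟨-, h⟩; omega), if_neg (by rintro ⟨-, h⟩; omega)]
  have hvrj : F' r j = t + 1 := by rw [hv, if_pos ⟨rfl, rfl⟩]
  have hjS : j ∉ S := fun h => absurd (hS_lt j h) (lt_irrefl j)
  have hvj_other : ∀ i, i ≠ r → F' i j = F i j :=
    fun i hi => hvout i j hjS (fun h => hi h.1)
  have hcol : ∀ c, c ∉ S → c ≠ j → ∀ i, F' i c = F i c :=
    fun c h1 h2 i => hvout i c h1 (fun hh => h2 hh.2)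
  -- inversion lemmas
  have hinv_t : ∀ i c, c ∈ S → F' i c = t → F i c = t + 1 := by
    intro i c hc hf
    by_cases h1 : F i c = t
    · have := hvS_t i c hc h1; omega
    · by_cases h2 : F i c = t + 1
      · exact h2
      · rw [hvS_keep i c hc h1 h2] at hf; omega
  have hinv_t1 : ∀ i c, c ∈ S → F' i c = t + 1 → F i c = t := by
    intro i c hc hf
    by_cases h1 : F i c = t
    · exact h1
    · by_cases h2 : F i c = t + 1
      · have := hvS_t1 i c hc h2; omega
      · rw [hvS_keep i c hc h1 h2] at hf; omega
  -- FreeTp1 at j in F'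
  have hncj' : ¬ ColContains n α F' j t := by
    rintro ⟨i, hbi, hfi⟩
    by_cases hi : i = r
    · rw [hi, hvrj] at hfi; omega
    · rw [hvj_other i hi] at hfi
      exact hdist i r j hbi hbox hi (by rw [hfi, hFrj])
  have hnopf' : ¬ ∃ i₀ j₀, PseudoFreePair n α F' t i₀ j₀ r j := by
    rintro ⟨i₀, j₀, hb0, hv0, hnc0, -, -, -, hri0, hj0j, hbet⟩
    have hj0S : j₀ ∉ S := by
      intro hmem
      obtain ⟨hFrj0, -⟩ := hS_self j₀ hmem
      exact hnc0 ⟨r, box_of_val r j₀ (by omega), hvS_t r j₀ hmem hFrj0⟩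
    have hcolj0 : ∀ i, F' i j₀ = F i j₀ := hcol j₀ hj0S (by omega)
    have hv0F : F i₀ j₀ = t := by rw [← hcolj0 i₀]; exact hv0
    have hbetF : ∀ k, j₀ < k → k < j → ColContains n α F k t := by
      intro k hk1 hk2
      by_cases hk : k ∈ S
      · obtain ⟨hfr, -⟩ := hS_self k hk
        exact ⟨r, box_of_val r k (by omega), hfr⟩
      · obtain ⟨⟨i, hbi, hfi⟩, -⟩ := hbet k hk1 hk2
        exact ⟨i, hbi, by rw [← hcol k hk (by omega) i]; exact hfi⟩
    have h1j0 : 1 ≤ j₀ := hb0.2.2.1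
    have hFr_ge : ∀ m, 1 ≤ m → m ≤ j → t ≤ F r m := by
      intro m h1 h2
      have := row_mono r m h1 j h2 hbox
      omega
    -- the key induction
    have step : ∀ m, j₀ ≤ m → m < j → t + 1 ≤ F r m →
        (∃ b, r < b ∧ Box n α b m ∧ F b m = t) →
        (t + 1 ≤ F r (m+1) ∧ (m + 1 < j →
          ∃ b, r < b ∧ Box n α b (m+1) ∧ F b (m+1) = t)) := by
      intro m hm1 hm2 hge hex
      obtain ⟨b, hrb, hbb, hfb⟩ := hex
      have hbrm : Box n α r m := box_of_val r m (by omega)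
      obtain ⟨-, hlt2⟩ := hinv b r m hbb hbrm hrb (by omega)
      refine ⟨by omega, ?_⟩
      intro hm3
      obtain ⟨i₂, hbi₂, hfi₂⟩ := hbetF (m+1) (by omega) hm3
      have hi₂r : i₂ ≠ r := by intro h; rw [h] at hfi₂; omega
      rcases lt_or_gt_of_ne hi₂r with hlt' | hgt'
      · exfalso
        have hbi₂m : Box n α i₂ m := ⟨hbi₂.1, hbi₂.2.1, by omega, by have := hbi₂.2.2.2; omega⟩
        have h1 : F i₂ (m+1) ≤ F i₂ m := hdec i₂ m (by omega) hbi₂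
        have h2 : F i₂ m ≠ t := fun h => hdist i₂ b m hbi₂m hbb (by omega) (by rw [h, hfb])
        obtain ⟨-, h4⟩ := hinv b i₂ m hbb hbi₂m (by omega) (by omega)
        omega
      · exact ⟨i₂, hgt', hbi₂, hfi₂⟩
    have hbrj0 : Box n α r j₀ := ⟨h1r, hrn, h1j0, by omega⟩
    have base1 : t + 1 ≤ F r j₀ := by
      have hge := hFr_ge j₀ h1j0 (by omega)
      have hne : F r j₀ ≠ t := fun h => hdist r i₀ j₀ hbrj0 hb0 (by omega) (by rw [h, hv0F])
      omega
    have main : ∀ d, j₀ + d < j →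
        (t + 1 ≤ F r (j₀ + d) ∧ ∃ b, r < b ∧ Box n α b (j₀ + d) ∧ F b (j₀ + d) = t) := by
      intro d
      induction d with
      | zero => intro h; exact ⟨base1, i₀, hri0, hb0, hv0F⟩
      | succ d ih =>
        intro h
        have hd : j₀ + d < j := by omega
        obtain ⟨hge, hex⟩ := ih hd
        obtain ⟨hge', hex'⟩ := step (j₀ + d) (by omega) hd hge hex
        exact ⟨hge', hex' (by omega)⟩
    have hd : j₀ + (j - j₀ - 1) < j := by omega
    obtain ⟨hge, hex⟩ := main (j - j₀ - 1) hd
    obtain ⟨hge', -⟩ := step _ (by omega) hd hge hex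
    have heq : j₀ + (j - j₀ - 1) + 1 = j := by omega
    rw [heq] at hge'
    omega
  have hB' : FreeTp1 n α F' t r j := ⟨hbox, hvrj, hncj', hnopf'⟩
  -- sSup computation
  have hub : ∀ c ∈ {c | FreeTp1 n α F' t r c}, c ≤ j := by
    intro c hc
    by_contra hcj
    push_neg at hcj
    obtain ⟨hbc, hfc, -, -⟩ := hc
    have hcS : c ∉ S := fun h => by have := hS_lt c h; omega
    have he : F' r c = F r c := hvout r c hcS (by rintro ⟨-, h⟩; omega)
    have h2 : F r c ≤ F r j := row_mono r j (by omega) c (by omega) hbc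
    omega
  have hsup : sSup {c | FreeTp1 n α F' t r c} = j :=
    le_antisymm (csSup_le ⟨j, hB'⟩ hub) (le_csSup ⟨j, hub⟩ hB')
  -- the L-interval equals S
  have hSL : {k | k < j ∧ ∀ m, k ≤ m → m < j →
      F' r m = t + 1 ∧ ∃ i, r < i ∧ Box n α i m ∧ F' i m = t} = S := by
    have anal : ∀ m, m < j → F r (m+1) = t → F' r m = t + 1 →
        (∃ i, r < i ∧ Box n α i m ∧ F' i m = t) →
        (F r m = t ∧ ∃ i, r < i ∧ Box n α i m ∧ F i m = t + 1) := by
      intro m hmj hnext hvr hex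
      obtain ⟨i, hri, hbi, hfi⟩ := hex
      by_cases hm : m ∈ S
      · exact hS_self m hm
      · exfalso
        have h1 : F' r m = F r m := hvout r m hm (by rintro ⟨-, h⟩; omega)
        have h2 : F' i m = F i m := hvout i m hm (by rintro ⟨h, -⟩; omega)
        have hbrm : Box n α r m := box_of_val r m (by omega)
        obtain ⟨-, h4⟩ := hinv i r m hbi hbrm hri (by omega)
        omega
    ext k
    simp only [Set.mem_setOf_eq]
    constructor
    · rintro ⟨hkj, hall⟩
      have down : ∀ d m, k ≤ m → m + 1 + d = j →
          (F r m = t ∧ ∃ i, r < i ∧ Box n α i m ∧ F i m = t + 1) := by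
        intro d
        induction d with
        | zero =>
          intro m hkm hmj
          obtain ⟨hvr, hex⟩ := hall m hkm (by omega)
          exact anal m (by omega) (by rw [show m + 1 = j by omega]; exact hFrj) hvr hex
        | succ d ih =>
          intro m hkm hmj
          obtain ⟨hvr, hex⟩ := hall m hkm (by omega)
          have hnext := ih (m+1) (by omega) (by omega)
          exact anal m (by omega) hnext.1 hvr hex
      exact (hSmem k).mpr ⟨hkj, fun m h1 h2 => down (j - m - 1) m h1 (by omega)⟩
    · intro hk
      refine ⟨hS_lt k hk, fun m h1 h2 => ?_⟩
      have hm : m ∈ S := hS_up k hk m h1 h2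
      obtain ⟨hfr, i, hri, hbi, hfi⟩ := hS_self m hm
      exact ⟨hvS_t r m hm hfr, i, hri, hbi, hvS_t1 i m hm hfi⟩
  -- final computation
  have hBne : {c | FreeTp1 n α F' t r c}.Nonempty := ⟨j, hB'⟩
  have hLop : Lop n α r t F' = fun i c =>
      if i = r ∧ c = sSup {c | FreeTp1 n α F' t r c} then t
      else if c ∈ {k | k < sSup {c | FreeTp1 n α F' t r c} ∧
          ∀ m, k ≤ m → m < sSup {c | FreeTp1 n α F' t r c} →
          F' r m = t + 1 ∧ ∃ i, r < i ∧ Box n α i m ∧ F' i m = t} ∧ F' i c = t then t + 1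
      else if c ∈ {k | k < sSup {c | FreeTp1 n α F' t r c} ∧
          ∀ m, k ≤ m → m < sSup {c | FreeTp1 n α F' t r c} →
          F' r m = t + 1 ∧ ∃ i, r < i ∧ Box n α i m ∧ F' i m = t} ∧ F' i c = t + 1 then t
      else F' i c := by
    unfold Lop
    rw [if_pos hBne]
  simp only [hsup] at hLop
  simp only [hSL] at hLop
  rw [hLop]
  funext i c
  by_cases h1 : i = r ∧ c = j
  · rw [if_pos h1]
    obtain ⟨e1, e2⟩ := h1
    rw [e1, e2, hFrj]
  · rw [if_neg h1]
    by_cases h2 : c ∈ S ∧ F' i c = t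
    · rw [if_pos h2]
      exact (hinv_t i c h2.1 h2.2).symm
    · rw [if_neg h2]
      by_cases h3 : c ∈ S ∧ F' i c = t + 1
      · rw [if_pos h3]
        exact (hinv_t1 i c h3.1 h3.2).symm
      · rw [if_neg h3]
        by_cases hc : c ∈ S
        · by_cases ha : F i c = t
          · exact absurd ⟨hc, hvS_t i c hc ha⟩ h3
          · by_cases hb' : F i c = t + 1
            · exact absurd ⟨hc, hvS_t1 i c hc hb'⟩ h2
            · exact hvS_keep i c hc ha hb'
        · exact hvout i c hc h1

end Skyline
end
end
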